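/- arXiv:2310.11471 — 12 statements merged into one kernel-verified Lean document; each statement's English description precedes it below -/
import Mathlib

section
/- Let n ≥ 1, let α₁,…,αₙ be non-negative real weights with α₁+⋯+αₙ = 1, and let G₁,…,Gₙ:[0,1]→ℝ be exposure curves (twice continuously differentiable, non-decreasing, concave, Gᵢ(0)=0, Gᵢ(1)=1, Gᵢ'(0)>0). Suppose at least one αᵢ with αᵢ Gᵢ'(0) > 0 exists (which holds since the weights sum to 1). Then G(z) = Σᵢ αᵢ Gᵢ(z) is again an exposure curve, and the induced distribution function F_Z (defined by F_Z(z) = 1 − G'(z)/G'(0) for z < 1 and F_Z(1) = 1) satisfies F_Z(z) = Σᵢ wᵢ Fᵢ(z) for all z ∈ [0,1], where Fᵢ is the distribution function induced by Gᵢ in the same way, and wᵢ = αᵢ Gᵢ'(0) / Σⱼ αⱼ Gⱼ'(0) are non-negative weights summing to 1. Moreover ∫₀¹ (1 − F_Z(s)) ds = Σᵢ wᵢ / Gᵢ'(0). -/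
/-- An exposure curve: a function `G : [0,1] → ℝ` that is twice continuously
differentiable (with continuous second derivative on `[0,1]`), non-decreasing,
concave, with `G 0 = 0`, `G 1 = 1` and `G' 0 > 0`. -/
def IsExposureCurve (G : ℝ → ℝ) : Prop :=
  MonotoneOn G (Set.Icc 0 1) ∧ ConcaveOn ℝ (Set.Icc 0 1) G ∧
  G 0 = 0 ∧ G 1 = 1 ∧
  ∃ G' G'' : ℝ → ℝ,
    (∀ z ∈ Set.Icc (0:ℝ) 1, HasDerivWithinAt G (G' z) (Set.Icc 0 1) z) ∧
    (∀ z ∈ Set.Icc (0:ℝ) 1, HasDerivWithinAt G' (G'' z) (Set.Icc 0 1) z) ∧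
    ContinuousOn G'' (Set.Icc 0 1) ∧ 0 < G' 0

/-- The distribution function induced by an exposure curve with derivative `G'`:
`F z = 1 - G' z / G' 0` for `z < 1` and `F 1 = 1`. -/
noncomputable def inducedDF (G' : ℝ → ℝ) : ℝ → ℝ :=
  fun z => if z = 1 then 1 else 1 - G' z / G' 0

/-!
Differentiating `G = ∑ αᵢ Gᵢ` gives `G' = ∑ αᵢ Gᵢ'`, so `1 - F_Z = G' / G'(0)` is the mixture of the
`1 - Fᵢ = Gᵢ' / Gᵢ'(0)` with weights proportional to `αᵢ Gᵢ'(0)`. Away from the null set `{1}`,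
`1 - F_Z = G' / G'(0)` integrates to `(G 1 - G 0) / G'(0) = 1 / ∑ⱼ αⱼ Gⱼ'(0)` by the fundamental
theorem of calculus.
-/

open Set Finset

theorem ConcaveOn.finsetSum {𝕜 E β ι : Type*} [Semiring 𝕜] [PartialOrder 𝕜]
    [AddCommMonoid E] [AddCommMonoid β] [PartialOrder β] [IsOrderedAddMonoid β]
    [SMul 𝕜 E] [Module 𝕜 β] {s : Set E} (hs : Convex 𝕜 s) {t : Finset ι}
    {f : ι → E → β} (hf : ∀ i ∈ t, ConcaveOn 𝕜 s (f i)) :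
    ConcaveOn 𝕜 s fun x => ∑ i ∈ t, f i x := by
  simpa only [Finset.sum_fn] using
    Finset.sum_induction f (ConcaveOn 𝕜 s) (fun _ _ => ConcaveOn.add)
      (concaveOn_const (0 : β) hs :) hf

theorem Finset.sum_div_sum_self {ι K : Type*} [DivisionSemiring K] {t : Finset ι} {a : ι → K}
    (ha : ∑ j ∈ t, a j ≠ 0) : ∑ i ∈ t, a i / ∑ j ∈ t, a j = 1 := by
  rw [← Finset.sum_div, div_self ha]

theorem one_sub_inducedDF_of_ne_one (G' : ℝ → ℝ) {z : ℝ} (hz : z ≠ 1) :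
    1 - inducedDF G' z = G' z / G' 0 := by
  simp [inducedDF, hz]

theorem integral_one_sub_inducedDF {G G' : ℝ → ℝ}
    (hG : ∀ z ∈ Icc (0:ℝ) 1, HasDerivWithinAt G (G' z) (Icc 0 1) z)
    (hG' : ContinuousOn G' (Icc 0 1)) :
    ∫ s in (0:ℝ)..1, (1 - inducedDF G' s) = (G 1 - G 0) / G' 0 := by
  have h_ae : ∀ᵐ s, s ∈ uIoc (0:ℝ) 1 → 1 - inducedDF G' s = G' s / G' 0 := by
    filter_upwards [MeasureTheory.measure_eq_zero_iff_ae_notMem.mp (Real.volume_singleton (a := 1))]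
      with s hs _ using one_sub_inducedDF_of_ne_one G' hs
  have hFTC : ∫ s in (0:ℝ)..1, G' s = G 1 - G 0 :=
    intervalIntegral.integral_eq_sub_of_hasDerivAt_of_le zero_le_one
      (fun z hz => (hG z hz).continuousWithinAt)
      (fun z hz => (hG z (Ioo_subset_Icc_self hz)).hasDerivAt (Icc_mem_nhds hz.1 hz.2))
      (hG'.intervalIntegrable_of_Icc zero_le_one)
  rw [intervalIntegral.integral_congr_ae h_ae, intervalIntegral.integral_div, hFTC]

section Mixture

variable {ι : Type*} [Fintype ι] {α : ι → ℝ}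

theorem HasDerivWithinAt.fun_sum_const_mul {f : ι → ℝ → ℝ} {f' : ι → ℝ} {s : Set ℝ} {x : ℝ}
    (h : ∀ i, HasDerivWithinAt (f i) (f' i) s x) :
    HasDerivWithinAt (fun z => ∑ i, α i * f i z) (∑ i, α i * f' i) s x :=
  HasDerivWithinAt.fun_sum fun i _ => (h i).const_mul (α i)

theorem isExposureCurve_sum_mul (hα : ∀ i, 0 ≤ α i) (hsum : ∑ i, α i = 1)
    {G G' G'' : ι → ℝ → ℝ}
    (hd1 : ∀ i, ∀ z ∈ Icc (0:ℝ) 1, HasDerivWithinAt (G i) (G' i z) (Icc 0 1) z)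
    (hd2 : ∀ i, ∀ z ∈ Icc (0:ℝ) 1, HasDerivWithinAt (G' i) (G'' i z) (Icc 0 1) z)
    (hcont : ∀ i, ContinuousOn (G'' i) (Icc 0 1))
    (hmono : ∀ i, MonotoneOn (G i) (Icc 0 1)) (hconc : ∀ i, ConcaveOn ℝ (Icc 0 1) (G i))
    (h0 : ∀ i, G i 0 = 0) (h1 : ∀ i, G i 1 = 1) (hS : 0 < ∑ i, α i * G' i 0) :
    IsExposureCurve (fun z => ∑ i, α i * G i z) := by
  refine ⟨?_, ?_, by simp [h0], by simp [h1, hsum], fun z => ∑ i, α i * G' i z,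
    fun z => ∑ i, α i * G'' i z, fun z hz => .fun_sum_const_mul fun i => hd1 i z hz,
    fun z hz => .fun_sum_const_mul fun i => hd2 i z hz,
    continuousOn_finsetSum _ fun i _ => (hcont i).const_smul (α i), hS⟩
  · exact MonotoneOn.finsetSum fun i _ a ha b hb hab =>
      mul_le_mul_of_nonneg_left (hmono i ha hb hab) (hα i)
  · exact ConcaveOn.finsetSum (convex_Icc 0 1) fun i _ => (hconc i).smul (hα i)

theorem inducedDF_sum_mul {G' : ι → ℝ → ℝ} (hG' : ∀ i, G' i 0 ≠ 0)
    (hS : ∑ j, α j * G' j 0 ≠ 0) (z : ℝ) :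
    inducedDF (fun z => ∑ i, α i * G' i z) z
      = ∑ i, (α i * G' i 0 / ∑ j, α j * G' j 0) * inducedDF (G' i) z := by
  by_cases hz : z = 1
  · simp [inducedDF, hz, Finset.sum_div_sum_self hS]
  · have hterm : ∀ i, (α i * G' i 0 / ∑ j, α j * G' j 0) * inducedDF (G' i) z
        = α i * G' i 0 / ∑ j, α j * G' j 0 - α i * G' i z / ∑ j, α j * G' j 0 := by
      intro i
      have hi := hG' i
      simp only [inducedDF, hz, if_false]
      field_simp
    rw [Finset.sum_congr rfl fun i _ => hterm i, Finset.sum_sub_distrib,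
      Finset.sum_div_sum_self hS, ← Finset.sum_div]
    simp [inducedDF, hz]

end Mixture

theorem statement2_general (n : ℕ) (α : Fin n → ℝ)
    (hα : ∀ i, 0 ≤ α i) (hsum : ∑ i, α i = 1)
    (Gs Gs' Gs'' : Fin n → ℝ → ℝ)
    (hd1 : ∀ i, ∀ z ∈ Set.Icc (0:ℝ) 1, HasDerivWithinAt (Gs i) (Gs' i z) (Set.Icc 0 1) z)
    (hd2 : ∀ i, ∀ z ∈ Set.Icc (0:ℝ) 1, HasDerivWithinAt (Gs' i) (Gs'' i z) (Set.Icc 0 1) z)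
    (hcont : ∀ i, ContinuousOn (Gs'' i) (Set.Icc 0 1))
    (hmono : ∀ i, MonotoneOn (Gs i) (Set.Icc 0 1))
    (hconc : ∀ i, ConcaveOn ℝ (Set.Icc 0 1) (Gs i))
    (h0 : ∀ i, Gs i 0 = 0) (h1 : ∀ i, Gs i 1 = 1)
    (hpos : ∀ i, 0 < Gs' i 0)
    (hex : ∃ i, 0 < α i * Gs' i 0) :
    IsExposureCurve (fun z => ∑ i, α i * Gs i z) ∧
    (∀ i, 0 ≤ α i * Gs' i 0 / ∑ j, α j * Gs' j 0) ∧
    (∑ i, α i * Gs' i 0 / ∑ j, α j * Gs' j 0) = 1 ∧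
    (∀ z ∈ Set.Icc (0:ℝ) 1,
      inducedDF (fun z => ∑ i, α i * Gs' i z) z
        = ∑ i, (α i * Gs' i 0 / ∑ j, α j * Gs' j 0) * inducedDF (Gs' i) z) ∧
    (∫ s in (0:ℝ)..1, (1 - inducedDF (fun z => ∑ i, α i * Gs' i z) s))
        = ∑ i, (α i * Gs' i 0 / ∑ j, α j * Gs' j 0) * (1 / Gs' i 0) := by
  have hterm : ∀ i, 0 ≤ α i * Gs' i 0 := fun i => mul_nonneg (hα i) (hpos i).le
  obtain ⟨k, hk⟩ := hex
  have hS : 0 < ∑ j, α j * Gs' j 0 := Finset.sum_pos' (fun j _ => hterm j) ⟨k, mem_univ k, hk⟩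
  have hmix' : ∀ z ∈ Icc (0:ℝ) 1,
      HasDerivWithinAt (fun z => ∑ i, α i * Gs i z) (∑ i, α i * Gs' i z) (Icc 0 1) z :=
    fun z hz => .fun_sum_const_mul fun i => hd1 i z hz
  have hmix'_cont : ContinuousOn (fun z => ∑ i, α i * Gs' i z) (Icc 0 1) := fun z hz =>
    (HasDerivWithinAt.fun_sum_const_mul (α := α) fun i => hd2 i z hz).continuousWithinAt
  refine ⟨isExposureCurve_sum_mul hα hsum hd1 hd2 hcont hmono hconc h0 h1 hS,
    fun i => div_nonneg (hterm i) hS.le, Finset.sum_div_sum_self hS.ne',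
    fun z _ => inducedDF_sum_mul (fun i => (hpos i).ne') hS.ne' z, ?_⟩
  rw [integral_one_sub_inducedDF hmix' hmix'_cont]
  calc (∑ i, α i * Gs i 1 - ∑ i, α i * Gs i 0) / ∑ j, α j * Gs' j 0
      = ∑ i, α i / ∑ j, α j * Gs' j 0 := by simp [h0, h1, hsum, ← Finset.sum_div]
    _ = ∑ i, (α i * Gs' i 0 / ∑ j, α j * Gs' j 0) * (1 / Gs' i 0) :=
        Finset.sum_congr rfl fun i _ => by field_simp [(hpos i).ne']

/-- A convex combination `G = ∑ αᵢ Gᵢ` of exposure curves is again an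
exposure curve; the induced distribution function is the mixture `∑ wᵢ Fᵢ` of the
induced distribution functions with weights `wᵢ = αᵢ Gᵢ' 0 / ∑ⱼ αⱼ Gⱼ' 0` (non-negative
and summing to 1), and the mean satisfies `∫₀¹ (1 - F_Z s) ds = ∑ wᵢ / Gᵢ' 0`. -/
theorem statement2 (n : ℕ) (hn : 1 ≤ n) (α : Fin n → ℝ)
    (hα : ∀ i, 0 ≤ α i) (hsum : ∑ i, α i = 1)
    (Gs Gs' Gs'' : Fin n → ℝ → ℝ)
    (hd1 : ∀ i, ∀ z ∈ Set.Icc (0:ℝ) 1, HasDerivWithinAt (Gs i) (Gs' i z) (Set.Icc 0 1) z)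
    (hd2 : ∀ i, ∀ z ∈ Set.Icc (0:ℝ) 1, HasDerivWithinAt (Gs' i) (Gs'' i z) (Set.Icc 0 1) z)
    (hcont : ∀ i, ContinuousOn (Gs'' i) (Set.Icc 0 1))
    (hmono : ∀ i, MonotoneOn (Gs i) (Set.Icc 0 1))
    (hconc : ∀ i, ConcaveOn ℝ (Set.Icc 0 1) (Gs i))
    (h0 : ∀ i, Gs i 0 = 0) (h1 : ∀ i, Gs i 1 = 1)
    (hpos : ∀ i, 0 < Gs' i 0)
    (hex : ∃ i, 0 < α i * Gs' i 0) :
    IsExposureCurve (fun z => ∑ i, α i * Gs i z) ∧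
    (∀ i, 0 ≤ α i * Gs' i 0 / ∑ j, α j * Gs' j 0) ∧
    (∑ i, α i * Gs' i 0 / ∑ j, α j * Gs' j 0) = 1 ∧
    (∀ z ∈ Set.Icc (0:ℝ) 1,
      inducedDF (fun z => ∑ i, α i * Gs' i z) z
        = ∑ i, (α i * Gs' i 0 / ∑ j, α j * Gs' j 0) * inducedDF (Gs' i) z) ∧
    (∫ s in (0:ℝ)..1, (1 - inducedDF (fun z => ∑ i, α i * Gs' i z) s))
        = ∑ i, (α i * Gs' i 0 / ∑ j, α j * Gs' j 0) * (1 / Gs' i 0) :=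
  statement2_general n α hα hsum Gs Gs' Gs'' hd1 hd2 hcont hmono hconc h0 h1 hpos hex
end

section
/- Let g > 1 and b > 0, and let f_{b,g}:[0,1)→ℝ be the MBBEFD density, defined by f_{b,g}(z) = (g−1)(1+(g−1)z)^{−2} if b = 1, f_{b,g}(z) = −log(b) b^z if bg = 1, and f_{b,g}(z) = (g−1)(b−1)log(b) b^{1−z} / ((g−1)b^{1−z} + (1−bg))² otherwise. If bg ≥ 1, or if bg < 1 and (1−bg)/(g−1) ≤ b, then f_{b,g} is monotonically decreasing (non-increasing) on [0,1). -/
/-- The MBBEFD density on `[0,1)` for parameters `g > 1`, `b > 0`: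
`(g-1)(1+(g-1)z)⁻²` if `b = 1`, `-log(b) bᶻ` if `bg = 1`, and
`(g-1)(b-1)log(b) b^(1-z) / ((g-1)b^(1-z) + (1-bg))²` otherwise. -/
noncomputable def mbbefdDensity (b g : ℝ) : ℝ → ℝ := fun z =>
  if b = 1 then (g - 1) / (1 + (g - 1) * z) ^ 2
  else if b * g = 1 then -Real.log b * b ^ z
  else (g - 1) * (b - 1) * Real.log b * b ^ (1 - z) /
    ((g - 1) * b ^ (1 - z) + (1 - b * g)) ^ 2

set_option maxHeartbeats 2000000 in
/-- For `g > 1`, `b > 0`, if `bg ≥ 1`, or if `bg < 1` and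
`(1-bg)/(g-1) ≤ b`, then the MBBEFD density is monotonically decreasing
(non-increasing) on `[0,1)`. -/
theorem statement5 (b g : ℝ) (hg : 1 < g) (hb : 0 < b)
    (h : 1 ≤ b * g ∨ (b * g < 1 ∧ (1 - b * g) / (g - 1) ≤ b)) :
    AntitoneOn (mbbefdDensity b g) (Set.Ico 0 1) := by
  intro x hx y hy hxy
  obtain ⟨hx0, hx1⟩ := hx
  obtain ⟨hy0, hy1⟩ := hy
  have hg1 : 0 < g - 1 := by linarith
  unfold mbbefdDensity
  by_cases hb1 : b = 1
  · simp only [if_pos hb1]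
    subst hb1
    have hdx : 0 < 1 + (g - 1) * x := by nlinarith
    have hdy : 0 < 1 + (g - 1) * y := by nlinarith
    gcongr <;> nlinarith
  · simp only [if_neg hb1]
    by_cases hbg : b * g = 1
    · simp only [if_pos hbg]
      have hblt : b < 1 := by
        rcases lt_or_gt_of_ne hb1 with hlt | hgt
        · exact hlt
        · nlinarith
      have hlog : Real.log b < 0 := Real.log_neg hb hblt
      have hpow : b ^ y ≤ b ^ x := Real.rpow_le_rpow_of_exponent_ge hb hblt.le hxy
      nlinarith [mul_le_mul_of_nonneg_left hpow (by linarith : (0:ℝ) ≤ -Real.log b)]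
    · simp only [if_neg hbg]
      set c := 1 - b * g with hc
      set u := b ^ (1 - x) with hu
      set v := b ^ (1 - y) with hv
      have hu0 : 0 < u := Real.rpow_pos_of_pos hb _
      have hv0 : 0 < v := Real.rpow_pos_of_pos hb _
      rcases lt_or_gt_of_ne hb1 with hblt | hbgt
      · -- b < 1
        have hbu : b ≤ u := by
          calc b = b ^ (1:ℝ) := (Real.rpow_one b).symm
          _ ≤ u := Real.rpow_le_rpow_of_exponent_ge hb hblt.le (by linarith)
        have hbv : b ≤ v := by
          calc b = b ^ (1:ℝ) := (Real.rpow_one b).symm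
          _ ≤ v := Real.rpow_le_rpow_of_exponent_ge hb hblt.le (by linarith)
        have huv : u ≤ v := Real.rpow_le_rpow_of_exponent_ge hb hblt.le (by linarith)
        have hcle : c ≤ b * (g - 1) := by
          rcases h with h1 | ⟨h1, h2⟩
          · nlinarith
          · rw [div_le_iff₀ hg1] at h2; linarith
        have hcge : -(b * (g - 1)) ≤ c := by nlinarith
        have hsq : c ^ 2 ≤ (b * (g - 1)) ^ 2 := sq_le_sq' hcge hcle
        have hbbuv : b * b ≤ u * v := mul_le_mul hbu hbv hb.le hu0.le
        have hfac : 0 ≤ (g - 1) ^ 2 * (u * v) - c ^ 2 := by nlinarith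
        have hp : 0 ≤ (v - u) * ((g - 1) ^ 2 * (u * v) - c ^ 2) :=
          mul_nonneg (by linarith) hfac
        have key : v * ((g - 1) * u + c) ^ 2 ≤ u * ((g - 1) * v + c) ^ 2 := by
          nlinarith [hp]
        have hDx : 0 < (g - 1) * u + c := by
          nlinarith [mul_le_mul_of_nonneg_left hbu hg1.le]
        have hDy : 0 < (g - 1) * v + c := by
          nlinarith [mul_le_mul_of_nonneg_left hbv hg1.le]
        have hC : 0 ≤ (g - 1) * (b - 1) * Real.log b := by
          nlinarith [mul_nonneg (by nlinarith : (0:ℝ) ≤ (g - 1) * (1 - b))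
            (by linarith [Real.log_neg hb hblt] : (0:ℝ) ≤ -Real.log b)]
        rw [div_le_div_iff₀ (by positivity) (by positivity)]
        calc (g - 1) * (b - 1) * Real.log b * v * ((g - 1) * u + c) ^ 2
            = ((g - 1) * (b - 1) * Real.log b) * (v * ((g - 1) * u + c) ^ 2) := by ring
          _ ≤ ((g - 1) * (b - 1) * Real.log b) * (u * ((g - 1) * v + c) ^ 2) :=
              mul_le_mul_of_nonneg_left key hC
          _ = (g - 1) * (b - 1) * Real.log b * u * ((g - 1) * v + c) ^ 2 := by ring
      · -- b > 1
        have hub : u ≤ b := by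
          calc u ≤ b ^ (1:ℝ) := Real.rpow_le_rpow_of_exponent_le hbgt.le (by linarith)
          _ = b := Real.rpow_one b
        have hvb : v ≤ b := by
          calc v ≤ b ^ (1:ℝ) := Real.rpow_le_rpow_of_exponent_le hbgt.le (by linarith)
          _ = b := Real.rpow_one b
        have hvu : v ≤ u := Real.rpow_le_rpow_of_exponent_le hbgt.le (by linarith)
        have hcle : c ≤ -(b * (g - 1)) := by nlinarith
        have hB : 0 < b * (g - 1) := by positivity
        have hsq : (b * (g - 1)) ^ 2 ≤ c ^ 2 := by
          nlinarith [mul_nonneg (by linarith : (0:ℝ) ≤ -(c + b * (g - 1)))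
            (by linarith : (0:ℝ) ≤ -(c - b * (g - 1)))]
        have huvbb : u * v ≤ b * b := mul_le_mul hub hvb hv0.le hb.le
        have hfac : (g - 1) ^ 2 * (u * v) - c ^ 2 ≤ 0 := by nlinarith
        have hp : 0 ≤ (u - v) * (c ^ 2 - (g - 1) ^ 2 * (u * v)) :=
          mul_nonneg (by linarith) (by linarith)
        have key : v * ((g - 1) * u + c) ^ 2 ≤ u * ((g - 1) * v + c) ^ 2 := by
          nlinarith [hp]
        have hDx : (g - 1) * u + c < 0 := by
          nlinarith [mul_le_mul_of_nonneg_left hub hg1.le]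
        have hDy : (g - 1) * v + c < 0 := by
          nlinarith [mul_le_mul_of_nonneg_left hvb hg1.le]
        have hC : 0 ≤ (g - 1) * (b - 1) * Real.log b :=
          mul_nonneg (mul_nonneg hg1.le (by linarith)) (Real.log_pos hbgt).le
        have hDx2 : 0 < ((g - 1) * u + c) ^ 2 := pow_two_pos_of_ne_zero hDx.ne
        have hDy2 : 0 < ((g - 1) * v + c) ^ 2 := pow_two_pos_of_ne_zero hDy.ne
        rw [div_le_div_iff₀ hDy2 hDx2]
        calc (g - 1) * (b - 1) * Real.log b * v * ((g - 1) * u + c) ^ 2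
            = ((g - 1) * (b - 1) * Real.log b) * (v * ((g - 1) * u + c) ^ 2) := by ring
          _ ≤ ((g - 1) * (b - 1) * Real.log b) * (u * ((g - 1) * v + c) ^ 2) :=
              mul_le_mul_of_nonneg_left key hC
          _ = (g - 1) * (b - 1) * Real.log b * u * ((g - 1) * v + c) ^ 2 := by ring
end

section
/- Let b > 0 and g > 1 with bg < 1, set a = b(g−1)/(1−bg), and assume b < a < 1 (equivalently b < (1−bg)/(g−1) < 1). Define h:ℝ→ℝ by h(z) = (a+1) log(1/b) ψ'( z log(1/b) + log(a) ), where ψ'(t) = e^t/(e^t+1)², so that h agrees with the MBBEFD density f_{b,g} on [0,1). Then h is bell shaped around z* = 1 − log((1−bg)/(g−1))/log(b) = log(a)/log(b) ∈ (0,1): h(z* + t) = h(z* − t) for every t ∈ ℝ, h is strictly increasing on (−∞, z*] and strictly decreasing on [z*, ∞), and h attains its global maximum at z*. -/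
/-- The derivative `ψ'` of the logistic function `ψ(t) = eᵗ/(eᵗ+1)`. -/
noncomputable def logisticDeriv (t : ℝ) : ℝ := Real.exp t / (Real.exp t + 1) ^ 2

lemma logisticDeriv_eq_cosh (u : ℝ) :
    logisticDeriv u = 1 / (4 * Real.cosh (u / 2) ^ 2) := by
  unfold logisticDeriv
  have hx : (0:ℝ) < Real.exp (u / 2) := Real.exp_pos _
  have hxu : Real.exp u = Real.exp (u / 2) * Real.exp (u / 2) := by
    rw [← Real.exp_add]; ring_nf
  rw [Real.cosh_eq, hxu]
  have hnegu : Real.exp (-(u / 2)) = (Real.exp (u / 2))⁻¹ := Real.exp_neg _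
  rw [hnegu]
  have h1 : Real.exp (u / 2) ≠ 0 := ne_of_gt hx
  have h2 : Real.exp (u / 2) * Real.exp (u / 2) + 1 ≠ 0 := by positivity
  field_simp
  ring

lemma logisticDeriv_neg (u : ℝ) : logisticDeriv (-u) = logisticDeriv u := by
  rw [logisticDeriv_eq_cosh, logisticDeriv_eq_cosh, neg_div, Real.cosh_neg]

lemma logisticDeriv_lt {u v : ℝ} (h : |v| < |u|) :
    logisticDeriv u < logisticDeriv v := by
  rw [logisticDeriv_eq_cosh, logisticDeriv_eq_cosh]
  have hc : Real.cosh (v / 2) < Real.cosh (u / 2) := by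
    rw [Real.cosh_lt_cosh, abs_div, abs_div, abs_two]
    linarith
  have hcv : 0 < Real.cosh (v / 2) := Real.cosh_pos _
  apply one_div_lt_one_div_of_lt (by positivity)
  have : Real.cosh (v / 2) ^ 2 < Real.cosh (u / 2) ^ 2 := by nlinarith
  linarith

/-- For `b > 0`, `g > 1` with `bg < 1`, `a = b(g-1)/(1-bg)` and
`b < a < 1`, the function `h(z) = (a+1) log(1/b) ψ'(z log(1/b) + log a)` (which agrees
with the MBBEFD density on `[0,1)`) is bell shaped around
`z* = log a / log b = 1 - log((1-bg)/(g-1))/log b ∈ (0,1)`: it is symmetric around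
`z*`, strictly increasing on `(-∞, z*]`, strictly decreasing on `[z*, ∞)`, and attains
its global maximum at `z*`. -/
theorem statement9 (b g a : ℝ) (hb : 0 < b) (hg : 1 < g) (hbg : b * g < 1)
    (ha : a = b * (g - 1) / (1 - b * g)) (hba : b < a) (ha1 : a < 1) :
    let h : ℝ → ℝ := fun z =>
      (a + 1) * Real.log (1 / b) * logisticDeriv (z * Real.log (1 / b) + Real.log a)
    let zs : ℝ := Real.log a / Real.log b
    zs = 1 - Real.log ((1 - b * g) / (g - 1)) / Real.log b ∧
    zs ∈ Set.Ioo (0:ℝ) 1 ∧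
    (∀ t : ℝ, h (zs + t) = h (zs - t)) ∧
    StrictMonoOn h (Set.Iic zs) ∧
    StrictAntiOn h (Set.Ici zs) ∧
    (∀ z : ℝ, h z ≤ h zs) := by
  intro h zs
  have hdef : ∀ z, h z =
      (a + 1) * Real.log (1 / b) * logisticDeriv (z * Real.log (1 / b) + Real.log a) :=
    fun z => rfl
  have hzs : zs = Real.log a / Real.log b := rfl
  have hb1 : b < 1 := lt_trans hba ha1
  have ha0 : 0 < a := lt_trans hb hba
  have hlb : Real.log b < 0 := Real.log_neg hb hb1
  have hlbne : Real.log b ≠ 0 := ne_of_lt hlb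
  have hla : Real.log a < 0 := Real.log_neg ha0 ha1
  have hlba : Real.log b < Real.log a := Real.log_lt_log hb hba
  have hL : Real.log (1 / b) = -Real.log b := by rw [one_div, Real.log_inv]
  have hLpos : 0 < Real.log (1 / b) := by rw [hL]; linarith
  have hzsL : zs * Real.log (1 / b) = -Real.log a := by
    rw [hzs, hL]; field_simp
  have key : ∀ z, z * Real.log (1 / b) + Real.log a = (z - zs) * Real.log (1 / b) := by
    intro z; rw [sub_mul, hzsL]; ring
  have hval : ∀ z, h z =
      (a + 1) * Real.log (1 / b) * logisticDeriv ((z - zs) * Real.log (1 / b)) := by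
    intro z; rw [hdef, key]
  have hC : 0 < (a + 1) * Real.log (1 / b) := by
    apply mul_pos (by linarith) hLpos
  have hg1 : (0:ℝ) < g - 1 := by linarith
  have hbg1 : (0:ℝ) < 1 - b * g := by linarith
  refine ⟨?_, ?_, ?_, ?_, ?_, ?_⟩
  · -- zs = 1 - log((1-bg)/(g-1))/log b
    have hloga : Real.log a = Real.log b + Real.log (g - 1) - Real.log (1 - b * g) := by
      rw [ha, Real.log_div (by positivity) (ne_of_gt hbg1),
        Real.log_mul (ne_of_gt hb) (ne_of_gt hg1)]
    have hlogq : Real.log ((1 - b * g) / (g - 1)) =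
        Real.log (1 - b * g) - Real.log (g - 1) :=
      Real.log_div (ne_of_gt hbg1) (ne_of_gt hg1)
    rw [hzs, hlogq, hloga]
    field_simp
    ring
  · -- zs ∈ (0,1)
    have hzs' : zs = (-Real.log a) / (-Real.log b) := by
      rw [hzs, neg_div_neg_eq]
    constructor
    · rw [hzs']; apply div_pos (by linarith) (by linarith)
    · rw [hzs']; rw [div_lt_one (by linarith)]; linarith
  · -- symmetry
    intro t
    rw [hval, hval]
    congr 1
    rw [show (zs - t - zs) * Real.log (1 / b) =
        -((zs + t - zs) * Real.log (1 / b)) by ring, logisticDeriv_neg]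
  · -- strict mono on Iic zs
    intro x hx y hy hxy
    simp only [Set.mem_Iic] at hx hy
    rw [hval, hval]
    apply mul_lt_mul_of_pos_left _ hC
    apply logisticDeriv_lt
    have h1 : (x - zs) * Real.log (1 / b) ≤ 0 :=
      mul_nonpos_of_nonpos_of_nonneg (by linarith) (le_of_lt hLpos)
    have h2 : (y - zs) * Real.log (1 / b) ≤ 0 :=
      mul_nonpos_of_nonpos_of_nonneg (by linarith) (le_of_lt hLpos)
    have h3 : (x - zs) * Real.log (1 / b) < (y - zs) * Real.log (1 / b) :=
      mul_lt_mul_of_pos_right (by linarith) hLpos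
    rw [abs_of_nonpos h1, abs_of_nonpos h2]
    linarith
  · -- strict anti on Ici zs
    intro x hx y hy hxy
    simp only [Set.mem_Ici] at hx hy
    rw [hval, hval]
    apply mul_lt_mul_of_pos_left _ hC
    apply logisticDeriv_lt
    have h1 : 0 ≤ (x - zs) * Real.log (1 / b) :=
      mul_nonneg (by linarith) (le_of_lt hLpos)
    have h2 : 0 ≤ (y - zs) * Real.log (1 / b) :=
      mul_nonneg (by linarith) (le_of_lt hLpos)
    have h3 : (x - zs) * Real.log (1 / b) < (y - zs) * Real.log (1 / b) :=
      mul_lt_mul_of_pos_right (by linarith) hLpos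
    rw [abs_of_nonneg h1, abs_of_nonneg h2]
    linarith
  · -- global max
    intro z
    rcases eq_or_ne z zs with rfl | hz
    · exact le_refl _
    · apply le_of_lt
      rw [hval, hval]
      apply mul_lt_mul_of_pos_left _ hC
      apply logisticDeriv_lt
      have hne : (z - zs) * Real.log (1 / b) ≠ 0 :=
        mul_ne_zero (sub_ne_zero.2 hz) (ne_of_gt hLpos)
      have : (zs - zs) * Real.log (1 / b) = 0 := by ring
      rw [this, abs_zero]
      exact abs_pos.2 hne
end

section
/- Let b:[0,1]→(0,∞) be twice continuously differentiable with b(0) ≠ b(1), and define G:[0,1]→ℝ by G(z) = (log b(z) − log b(0)) / (log b(1) − log b(0)). Then G is an exposure curve (twice continuously differentiable, non-decreasing, concave, G(0)=0, G(1)=1, G'(0)>0) if and only if one of the following two conditions holds: (i) b'(0) > 0, b'(z) ≥ 0 for all z ∈ [0,1], and b''(z)b(z) − b'(z)² ≤ 0 for all z ∈ [0,1]; or (ii) b'(0) < 0, b'(z) ≤ 0 for all z ∈ [0,1], and b''(z)b(z) − b'(z)² ≥ 0 for all z ∈ [0,1]. -/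
/-! For `D = log b(1) - log b(0)` the curve `G = (log b - log b(0)) / D` has
`G' = (b'/b)/D` and `G'' = ((b'' b - b'^2)/b^2)/D`. On an interval, monotonicity and concavity
of a `C²` function amount to `G' ≥ 0` and `G'' ≤ 0`, so `G` is an exposure curve iff
`G'(0) > 0`, `G' ≥ 0` and `G'' ≤ 0`. As `b > 0`, these signs are those of (i) when `D > 0`, i.e.
`b(0) < b(1)`, and those of (ii) when `D < 0`; in each case the other alternative would force `b`
to be monotone in the wrong direction. -/

open Set Filter

section DerivOnIcc

variable {a c : ℝ} {f f' f'' : ℝ → ℝ}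

lemma accPt_of_mem_Icc (hac : a < c) {x : ℝ} (hx : x ∈ Icc a c) : AccPt x (𝓟 (Icc a c)) :=
  uniqueDiffWithinAt_iff_accPt.1 (uniqueDiffOn_Icc hac x hx)

lemma monotoneOn_Icc_iff_of_hasDerivWithinAt (hac : a < c)
    (hf : ∀ x ∈ Icc a c, HasDerivWithinAt f (f' x) (Icc a c) x) :
    MonotoneOn f (Icc a c) ↔ ∀ x ∈ Icc a c, 0 ≤ f' x :=
  ⟨fun hmono x hx => (hf x hx).nonneg_of_monotoneOn (accPt_of_mem_Icc hac hx) hmono,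
    fun hf' => monotoneOn_of_hasDerivWithinAt_nonneg (convex_Icc a c)
      (fun x hx => (hf x hx).continuousWithinAt)
      (fun x hx => (hf x (interior_subset hx)).mono interior_subset)
      (fun x hx => hf' x (interior_subset hx))⟩

lemma antitoneOn_Icc_iff_of_hasDerivWithinAt (hac : a < c)
    (hf : ∀ x ∈ Icc a c, HasDerivWithinAt f (f' x) (Icc a c) x) :
    AntitoneOn f (Icc a c) ↔ ∀ x ∈ Icc a c, f' x ≤ 0 :=
  ⟨fun hanti x hx => (hf x hx).nonpos_of_antitoneOn (accPt_of_mem_Icc hac hx) hanti,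
    fun hf' => antitoneOn_of_hasDerivWithinAt_nonpos (convex_Icc a c)
      (fun x hx => (hf x hx).continuousWithinAt)
      (fun x hx => (hf x (interior_subset hx)).mono interior_subset)
      (fun x hx => hf' x (interior_subset hx))⟩

lemma concaveOn_Icc_iff_of_hasDerivWithinAt₂ (hac : a < c)
    (hf : ∀ x ∈ Icc a c, HasDerivWithinAt f (f' x) (Icc a c) x)
    (hf' : ∀ x ∈ Icc a c, HasDerivWithinAt f' (f'' x) (Icc a c) x) :
    ConcaveOn ℝ (Icc a c) f ↔ ∀ x ∈ Icc a c, f'' x ≤ 0 := by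
  refine ⟨fun hconc => ?_, fun hf'' => ?_⟩
  · have hanti : AntitoneOn f' (Icc a c) :=
      (hconc.antitoneOn_derivWithin fun x hx => (hf x hx).differentiableWithinAt).congr
        fun x hx => (hf x hx).derivWithin (uniqueDiffOn_Icc hac x hx)
    exact (antitoneOn_Icc_iff_of_hasDerivWithinAt hac hf').1 hanti
  · exact concaveOn_of_hasDerivWithinAt2_nonpos (convex_Icc a c)
      (fun x hx => (hf x hx).continuousWithinAt)
      (fun x hx => (hf x (interior_subset hx)).mono interior_subset)
      (fun x hx => (hf' x (interior_subset hx)).mono interior_subset)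
      (fun x hx => hf'' x (interior_subset hx))

end DerivOnIcc

theorem isExposureCurve_iff_of_hasDerivWithinAt {G G' G'' : ℝ → ℝ}
    (hG : ∀ z ∈ Icc (0 : ℝ) 1, HasDerivWithinAt G (G' z) (Icc 0 1) z)
    (hG' : ∀ z ∈ Icc (0 : ℝ) 1, HasDerivWithinAt G' (G'' z) (Icc 0 1) z)
    (hG'' : ContinuousOn G'' (Icc 0 1)) (h0 : G 0 = 0) (h1 : G 1 = 1) :
    IsExposureCurve G ↔
      0 < G' 0 ∧ (∀ z ∈ Icc (0 : ℝ) 1, 0 ≤ G' z) ∧ ∀ z ∈ Icc (0 : ℝ) 1, G'' z ≤ 0 := by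
  rw [IsExposureCurve, monotoneOn_Icc_iff_of_hasDerivWithinAt zero_lt_one hG,
    concaveOn_Icc_iff_of_hasDerivWithinAt₂ zero_lt_one hG hG']
  have hmem : (0 : ℝ) ∈ Icc (0 : ℝ) 1 := left_mem_Icc.2 zero_le_one
  constructor
  · rintro ⟨hmono, hconc, -, -, H', -, hH', -, -, hpos⟩
    have hH'0 : H' 0 = G' 0 :=
      (uniqueDiffOn_Icc zero_lt_one 0 hmem).eq_deriv _ (hH' 0 hmem) (hG 0 hmem)
    exact ⟨hH'0 ▸ hpos, hmono, hconc⟩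
  · rintro ⟨hpos, hmono, hconc⟩
    exact ⟨hmono, hconc, h0, h1, G', G'', hG, hG', hG'', hpos⟩

lemma pos_nonneg_nonpos_div_div_iff {s : Set ℝ} {x₀ D : ℝ} {u v w : ℝ → ℝ} (hD : 0 < D)
    (hw : ∀ z ∈ s, 0 < w z) (hx₀ : x₀ ∈ s) :
    (0 < u x₀ / w x₀ / D ∧ (∀ z ∈ s, 0 ≤ u z / w z / D) ∧ ∀ z ∈ s, v z / w z ^ 2 / D ≤ 0) ↔
      0 < u x₀ ∧ (∀ z ∈ s, 0 ≤ u z) ∧ ∀ z ∈ s, v z ≤ 0 := by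
  have hwD : ∀ z ∈ s, 0 < w z * D := fun z hz => mul_pos (hw z hz) hD
  have hw2D : ∀ z ∈ s, 0 < w z ^ 2 * D := fun z hz => mul_pos (pow_pos (hw z hz) 2) hD
  simp only [div_div]
  refine and_congr (div_pos_iff_of_pos_right (hwD x₀ hx₀))
    (and_congr (forall₂_congr fun z hz => ?_) (forall₂_congr fun z hz => ?_))
  · rw [le_div_iff₀ (hwD z hz), zero_mul]
  · rw [div_le_iff₀ (hw2D z hz), zero_mul]

theorem isExposureCurve_log_div_iff {b b' b'' : ℝ → ℝ}
    (hbpos : ∀ z ∈ Icc (0 : ℝ) 1, 0 < b z)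
    (hd1 : ∀ z ∈ Icc (0 : ℝ) 1, HasDerivWithinAt b (b' z) (Icc 0 1) z)
    (hd2 : ∀ z ∈ Icc (0 : ℝ) 1, HasDerivWithinAt b' (b'' z) (Icc 0 1) z)
    (hcont : ContinuousOn b'' (Icc 0 1)) (hD : Real.log (b 1) - Real.log (b 0) ≠ 0) :
    IsExposureCurve
        (fun z => (Real.log (b z) - Real.log (b 0)) / (Real.log (b 1) - Real.log (b 0))) ↔
      0 < b' 0 / b 0 / (Real.log (b 1) - Real.log (b 0)) ∧
      (∀ z ∈ Icc (0 : ℝ) 1, 0 ≤ b' z / b z / (Real.log (b 1) - Real.log (b 0))) ∧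
      ∀ z ∈ Icc (0 : ℝ) 1,
        (b'' z * b z - b' z ^ 2) / b z ^ 2 / (Real.log (b 1) - Real.log (b 0)) ≤ 0 := by
  set D := Real.log (b 1) - Real.log (b 0)
  have hb : ContinuousOn b (Icc 0 1) := fun z hz => (hd1 z hz).continuousWithinAt
  have hb' : ContinuousOn b' (Icc 0 1) := fun z hz => (hd2 z hz).continuousWithinAt
  have hG : ∀ z ∈ Icc (0 : ℝ) 1, HasDerivWithinAt
      (fun z => (Real.log (b z) - Real.log (b 0)) / D) (b' z / b z / D) (Icc 0 1) z :=
    fun z hz => (((hd1 z hz).log (hbpos z hz).ne').sub_const _).div_const D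
  have hG' : ∀ z ∈ Icc (0 : ℝ) 1, HasDerivWithinAt (fun z => b' z / b z / D)
      ((b'' z * b z - b' z ^ 2) / b z ^ 2 / D) (Icc 0 1) z := fun z hz =>
    (((hd2 z hz).fun_div (hd1 z hz) (hbpos z hz).ne').div_const D).congr_deriv (by ring)
  have hG'' : ContinuousOn (fun z => (b'' z * b z - b' z ^ 2) / b z ^ 2 / D) (Icc 0 1) :=
    (((hcont.mul hb).sub (hb'.pow 2)).div (hb.pow 2)
      fun z hz => pow_ne_zero 2 (hbpos z hz).ne').div_const D
  exact isExposureCurve_iff_of_hasDerivWithinAt hG hG' hG'' (by simp) (div_self hD)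

/-- For a twice continuously differentiable inner function
`b : [0,1] → (0,∞)` with `b 0 ≠ b 1`, the logarithmic linked curve
`G z = (log (b z) - log (b 0)) / (log (b 1) - log (b 0))` is an exposure curve if and
only if (i) `b' 0 > 0`, `b' ≥ 0` and `b'' b - (b')² ≤ 0` on `[0,1]`, or
(ii) `b' 0 < 0`, `b' ≤ 0` and `b'' b - (b')² ≥ 0` on `[0,1]`. -/
theorem statement10 (b b' b'' : ℝ → ℝ)
    (hbpos : ∀ z ∈ Set.Icc (0:ℝ) 1, 0 < b z)
    (hd1 : ∀ z ∈ Set.Icc (0:ℝ) 1, HasDerivWithinAt b (b' z) (Set.Icc 0 1) z)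
    (hd2 : ∀ z ∈ Set.Icc (0:ℝ) 1, HasDerivWithinAt b' (b'' z) (Set.Icc 0 1) z)
    (hcont : ContinuousOn b'' (Set.Icc 0 1))
    (hne : b 0 ≠ b 1) :
    IsExposureCurve
        (fun z => (Real.log (b z) - Real.log (b 0)) / (Real.log (b 1) - Real.log (b 0)))
      ↔ ((0 < b' 0 ∧ (∀ z ∈ Set.Icc (0:ℝ) 1, 0 ≤ b' z) ∧
            (∀ z ∈ Set.Icc (0:ℝ) 1, b'' z * b z - (b' z) ^ 2 ≤ 0)) ∨
         (b' 0 < 0 ∧ (∀ z ∈ Set.Icc (0:ℝ) 1, b' z ≤ 0) ∧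
            (∀ z ∈ Set.Icc (0:ℝ) 1, 0 ≤ b'' z * b z - (b' z) ^ 2))) := by
  have h0 : (0 : ℝ) ∈ Icc (0 : ℝ) 1 := left_mem_Icc.2 zero_le_one
  have h1 : (1 : ℝ) ∈ Icc (0 : ℝ) 1 := right_mem_Icc.2 zero_le_one
  have hD : Real.log (b 1) - Real.log (b 0) ≠ 0 := sub_ne_zero.2 fun h =>
    hne (Real.log_injOn_pos (hbpos 0 h0) (hbpos 1 h1) h.symm)
  rw [isExposureCurve_log_div_iff hbpos hd1 hd2 hcont hD]
  rcases hne.lt_or_gt with hlt | hgt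
  · have hDpos : 0 < Real.log (b 1) - Real.log (b 0) :=
      sub_pos.2 (Real.log_lt_log (hbpos 0 h0) hlt)
    have hb_anti : ¬ ∀ z ∈ Icc (0 : ℝ) 1, b' z ≤ 0 := fun h =>
      ((antitoneOn_Icc_iff_of_hasDerivWithinAt zero_lt_one hd1).2 h h0 h1 zero_le_one).not_gt hlt
    rw [pos_nonneg_nonpos_div_div_iff hDpos hbpos h0, or_iff_left fun h => hb_anti h.2.1]
  · have hDneg : 0 < -(Real.log (b 1) - Real.log (b 0)) :=
      neg_pos.2 (sub_neg.2 (Real.log_lt_log (hbpos 1 h1) hgt))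
    have hb_mono : ¬ ∀ z ∈ Icc (0 : ℝ) 1, 0 ≤ b' z := fun h =>
      ((monotoneOn_Icc_iff_of_hasDerivWithinAt zero_lt_one hd1).2 h h0 h1 zero_le_one).not_gt hgt
    have hsigns := pos_nonneg_nonpos_div_div_iff (u := fun z => -b' z)
      (v := fun z => -(b'' z * b z - b' z ^ 2)) hDneg hbpos h0
    simp only [neg_div, div_neg, neg_neg, neg_pos, neg_nonneg, neg_nonpos] at hsigns
    rw [hsigns, or_iff_right fun h => hb_mono h.2.1]
end

section
/- Let b:[0,1]→(0,∞) be twice continuously differentiable with b(0) ≠ b(1), satisfying either (i) b'(0) > 0, b' ≥ 0 on [0,1] and b''b − (b')² ≤ 0 on [0,1], or (ii) b'(0) < 0, b' ≤ 0 on [0,1] and b''b − (b')² ≥ 0 on [0,1]. Define F_Z:[0,1]→ℝ by F_Z(z) = 1 − (b'(z)/b'(0))·(b(0)/b(z)) for z ∈ [0,1) and F_Z(1) = 1. Then F_Z is a distribution function on [0,1] (non-decreasing, valued in [0,1], continuous on [0,1), F_Z(0)=0, F_Z(1)=1), with derivative on (0,1) equal to f_Z(z) = (b(0)/(−b'(0)))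 · (b''(z)b(z) − b'(z)²)/b(z)² ≥ 0, point mass at 1 equal to p = 1 − lim_{z→1⁻} F_Z(z) = (b'(1)/b'(0))·(b(0)/b(1)), and mean ∫₀¹ (1 − F_Z(s)) ds = (b(0)/(−b'(0))) · log(b(0)/b(1)). -/
/-!
Write `L = log b`, so that `L' = b'/b`. On `[0,1)`, `F = 1 - L'/L'(0)`, whose derivative is
`-L''/L'(0)` with `L'' = (b'' b - b'²)/b²`. Either sign condition makes `L''` and `L'(0)` of
opposite signs, so `F` increases from `F 0 = 0`, and `L'/L'(0) = (b'/b'(0)) (b(0)/b) ≥ 0` keeps it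
below `1`. The mean is `∫₀¹ L'/L'(0) = (L(1) - L(0))/L'(0)` by the fundamental theorem of calculus.
-/

open Set Topology

lemma nonneg_div_and_nonneg_div_neg_of_signs {p q r : ℝ}
    (h : (0 < p ∧ 0 ≤ q ∧ r ≤ 0) ∨ (p < 0 ∧ q ≤ 0 ∧ 0 ≤ r)) : 0 ≤ q / p ∧ 0 ≤ r / -p := by
  rcases h with ⟨hp, hq, hr⟩ | ⟨hp, hq, hr⟩
  · exact ⟨div_nonneg hq hp.le, div_nonneg_of_nonpos hr (by linarith)⟩
  · exact ⟨div_nonneg_of_nonpos hq hp.le, div_nonneg hr (by linarith)⟩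

lemma MonotoneOn.Icc_of_Ico {α β : Type*} [LinearOrder α] [Preorder β] {f : α → β} {a c : α}
    (hf : MonotoneOn f (Ico a c)) (hc : ∀ x ∈ Ico a c, f x ≤ f c) :
    MonotoneOn f (Icc a c) := by
  intro x hx y hy hxy
  rcases hy.2.lt_or_eq with hyc | rfl
  · exact hf ⟨hx.1, hxy.trans_lt hyc⟩ ⟨hy.1, hyc⟩ hxy
  · rcases hx.2.lt_or_eq with hxc | rfl
    · exact hc x ⟨hx.1, hxc⟩
    · exact le_rfl

lemma integral_div_eq_log_sub {f f' : ℝ → ℝ} {a c : ℝ} (hac : a ≤ c)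
    (hf : ∀ x ∈ Icc a c, HasDerivWithinAt f (f' x) (Icc a c) x)
    (hf' : ContinuousOn f' (Icc a c)) (hne : ∀ x ∈ Icc a c, f x ≠ 0) :
    ∫ x in a..c, f' x / f x = Real.log (f c) - Real.log (f a) := by
  have hcont : ContinuousOn f (Icc a c) := fun x hx => (hf x hx).continuousWithinAt
  refine intervalIntegral.integral_eq_sub_of_hasDerivAt_of_le hac (hcont.log hne)
    (fun x hx => ?_) ((hf'.div hcont hne).intervalIntegrable_of_Icc hac)
  have hx' : x ∈ Icc a c := Ioo_subset_Icc_self hx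
  exact ((hf x hx').hasDerivAt (Icc_mem_nhds hx.1 hx.2)).log (hne x hx')

namespace LogLinked

variable {b b' b'' : ℝ → ℝ}

/-- `1 - G'/G'(0)` for the logarithmic linked exposure curve `G`, whose derivative is
proportional to `b'/b`; the paper's `F_Z` agrees with it except at `1`. -/
noncomputable def cdf (b b' : ℝ → ℝ) (z : ℝ) : ℝ := 1 - b' z / b' 0 * (b 0 / b z)

noncomputable def density (b b' b'' : ℝ → ℝ) (z : ℝ) : ℝ :=
  b 0 / (-(b' 0)) * ((b'' z * b z - (b' z) ^ 2) / (b z) ^ 2)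

lemma cdf_zero (hb : b 0 ≠ 0) (hb' : b' 0 ≠ 0) : cdf b b' 0 = 0 := by
  simp [cdf, hb, hb']

lemma one_sub_cdf (z : ℝ) : 1 - cdf b b' z = b 0 / b' 0 * (b' z / b z) := by
  unfold cdf
  ring

lemma cdf_le_one {z : ℝ} (hb0 : 0 ≤ b 0) (hbz : 0 ≤ b z) (h : 0 ≤ b' z / b' 0) :
    cdf b b' z ≤ 1 := by
  have := mul_nonneg h (div_nonneg hb0 hbz)
  unfold cdf
  linarith

lemma density_nonneg {z : ℝ} (hb0 : 0 ≤ b 0) (h : 0 ≤ (b'' z * b z - b' z ^ 2) / -b' 0) :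
    0 ≤ density b b' b'' z := by
  have : density b b' b'' z = b 0 / b z ^ 2 * ((b'' z * b z - b' z ^ 2) / -b' 0) := by
    unfold density
    ring
  rw [this]
  exact mul_nonneg (div_nonneg hb0 (sq_nonneg _)) h

lemma hasDerivAt_cdf {x : ℝ} (h1 : HasDerivAt b (b' x) x) (h2 : HasDerivAt b' (b'' x) x)
    (hx : b x ≠ 0) : HasDerivAt (cdf b b') (density b b' b'' x) x := by
  have hcdf : cdf b b' = fun z => 1 - b 0 / b' 0 * (b' z / b z) := by
    funext z
    unfold cdf
    ring
  rw [hcdf]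
  refine (((h2.div h1 hx).const_mul (b 0 / b' 0)).const_sub 1).congr_deriv ?_
  unfold density
  ring

lemma continuousOn_cdf {s : Set ℝ} (hb : ContinuousOn b s) (hb' : ContinuousOn b' s)
    (hne : ∀ z ∈ s, b z ≠ 0) : ContinuousOn (cdf b b') s :=
  continuousOn_const.sub ((hb'.div_const _).mul (continuousOn_const.div hb hne))

lemma hasDerivAt_cdf_of_mem_Ioo {a c x : ℝ} (hne : ∀ z ∈ Icc a c, b z ≠ 0)
    (hd1 : ∀ z ∈ Icc a c, HasDerivWithinAt b (b' z) (Icc a c) z)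
    (hd2 : ∀ z ∈ Icc a c, HasDerivWithinAt b' (b'' z) (Icc a c) z) (hx : x ∈ Ioo a c) :
    HasDerivAt (cdf b b') (density b b' b'' x) x := by
  have hx' : x ∈ Icc a c := Ioo_subset_Icc_self hx
  have hnhds : Icc a c ∈ 𝓝 x := Icc_mem_nhds hx.1 hx.2
  exact hasDerivAt_cdf ((hd1 x hx').hasDerivAt hnhds) ((hd2 x hx').hasDerivAt hnhds) (hne x hx')

lemma monotoneOn_cdf {a c : ℝ} (hb0 : 0 ≤ b 0) (hne : ∀ z ∈ Icc a c, b z ≠ 0)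
    (hd1 : ∀ z ∈ Icc a c, HasDerivWithinAt b (b' z) (Icc a c) z)
    (hd2 : ∀ z ∈ Icc a c, HasDerivWithinAt b' (b'' z) (Icc a c) z)
    (hcurv : ∀ z ∈ Icc a c, 0 ≤ (b'' z * b z - b' z ^ 2) / -b' 0) :
    MonotoneOn (cdf b b') (Icc a c) := by
  refine monotoneOn_of_hasDerivWithinAt_nonneg (convex_Icc a c)
    (continuousOn_cdf (fun z hz => (hd1 z hz).continuousWithinAt)
      (fun z hz => (hd2 z hz).continuousWithinAt) hne)
    (fun x hx => ?_) (fun x hx => density_nonneg hb0 (hcurv x (interior_subset hx)))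
  rw [interior_Icc] at hx ⊢
  exact (hasDerivAt_cdf_of_mem_Ioo hne hd1 hd2 hx).hasDerivWithinAt

lemma integral_one_sub_cdf (hbpos : ∀ z ∈ Icc (0:ℝ) 1, 0 < b z)
    (hd1 : ∀ z ∈ Icc (0:ℝ) 1, HasDerivWithinAt b (b' z) (Icc 0 1) z)
    (hb' : ContinuousOn b' (Icc 0 1)) :
    ∫ s in (0:ℝ)..1, (1 - cdf b b' s) = b 0 / (-(b' 0)) * Real.log (b 0 / b 1) := by
  have hb0 : 0 < b 0 := hbpos 0 ⟨le_rfl, zero_le_one⟩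
  have hb1 : 0 < b 1 := hbpos 1 ⟨zero_le_one, le_rfl⟩
  simp only [one_sub_cdf]
  rw [intervalIntegral.integral_const_mul,
    integral_div_eq_log_sub zero_le_one hd1 hb' fun z hz => (hbpos z hz).ne',
    Real.log_div hb0.ne' hb1.ne', div_neg]
  ring

end LogLinked

open LogLinked in
theorem statement11_general (b b' b'' F : ℝ → ℝ)
    (hbpos : ∀ z ∈ Set.Icc (0:ℝ) 1, 0 < b z)
    (hd1 : ∀ z ∈ Set.Icc (0:ℝ) 1, HasDerivWithinAt b (b' z) (Set.Icc 0 1) z)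
    (hd2 : ∀ z ∈ Set.Icc (0:ℝ) 1, HasDerivWithinAt b' (b'' z) (Set.Icc 0 1) z)
    (hcond : (0 < b' 0 ∧ (∀ z ∈ Set.Icc (0:ℝ) 1, 0 ≤ b' z) ∧
                (∀ z ∈ Set.Icc (0:ℝ) 1, b'' z * b z - (b' z) ^ 2 ≤ 0)) ∨
             (b' 0 < 0 ∧ (∀ z ∈ Set.Icc (0:ℝ) 1, b' z ≤ 0) ∧
                (∀ z ∈ Set.Icc (0:ℝ) 1, 0 ≤ b'' z * b z - (b' z) ^ 2)))
    (hF : ∀ z ∈ Set.Ico (0:ℝ) 1, F z = 1 - b' z / b' 0 * (b 0 / b z))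
    (hF1 : F 1 = 1) :
    MonotoneOn F (Set.Icc 0 1) ∧
    (∀ z ∈ Set.Icc (0:ℝ) 1, F z ∈ Set.Icc (0:ℝ) 1) ∧
    ContinuousOn F (Set.Ico 0 1) ∧
    F 0 = 0 ∧ F 1 = 1 ∧
    (∀ z ∈ Set.Ioo (0:ℝ) 1,
      HasDerivAt F (b 0 / (-(b' 0)) * ((b'' z * b z - (b' z) ^ 2) / (b z) ^ 2)) z ∧
      0 ≤ b 0 / (-(b' 0)) * ((b'' z * b z - (b' z) ^ 2) / (b z) ^ 2)) ∧
    Filter.Tendsto F (nhdsWithin 1 (Set.Iio 1))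
      (nhds (1 - b' 1 / b' 0 * (b 0 / b 1))) ∧
    (∫ s in (0:ℝ)..1, (1 - F s)) = b 0 / (-(b' 0)) * Real.log (b 0 / b 1) := by
  have hb'0 : b' 0 ≠ 0 := by
    rcases hcond with h | h
    exacts [h.1.ne', h.1.ne]
  have hsign (z : ℝ) (hz : z ∈ Icc (0:ℝ) 1) :
      0 ≤ b' z / b' 0 ∧ 0 ≤ (b'' z * b z - b' z ^ 2) / -b' 0 :=
    nonneg_div_and_nonneg_div_neg_of_signs <| hcond.imp
      (fun h => ⟨h.1, h.2.1 z hz, h.2.2 z hz⟩) (fun h => ⟨h.1, h.2.1 z hz, h.2.2 z hz⟩)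
  have hb0 : 0 < b 0 := hbpos 0 ⟨le_rfl, zero_le_one⟩
  have hbne (z : ℝ) (hz : z ∈ Icc (0:ℝ) 1) : b z ≠ 0 := (hbpos z hz).ne'
  have hb'cont : ContinuousOn b' (Icc 0 1) := fun z hz => (hd2 z hz).continuousWithinAt
  have hcdf : ContinuousOn (cdf b b') (Icc 0 1) :=
    continuousOn_cdf (fun z hz => (hd1 z hz).continuousWithinAt) hb'cont hbne
  have hFH : EqOn F (cdf b b') (Ico 0 1) := hF
  have hF0 : F 0 = 0 := (hFH ⟨le_rfl, zero_lt_one⟩).trans (cdf_zero hb0.ne' hb'0)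
  have hmono : MonotoneOn F (Icc 0 1) :=
    (((monotoneOn_cdf hb0.le hbne hd1 hd2 fun z hz => (hsign z hz).2).mono
      Ico_subset_Icc_self).congr hFH.symm).Icc_of_Ico fun z hz => by
        have hz' := Ico_subset_Icc_self hz
        rw [hFH hz, hF1]
        exact cdf_le_one hb0.le (hbpos z hz').le (hsign z hz').1
  refine ⟨hmono, fun z hz => ⟨?_, ?_⟩, (hcdf.mono Ico_subset_Icc_self).congr hFH, hF0, hF1,
    fun z hz => ⟨?_, density_nonneg hb0.le (hsign z (Ioo_subset_Icc_self hz)).2⟩, ?_, ?_⟩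
  · exact hF0 ▸ hmono ⟨le_rfl, zero_le_one⟩ hz hz.1
  · exact hF1 ▸ hmono hz ⟨zero_le_one, le_rfl⟩ hz.2
  · refine (hasDerivAt_cdf_of_mem_Ioo hbne hd1 hd2 hz).congr_of_eventuallyEq ?_
    filter_upwards [Ioo_mem_nhds hz.1 hz.2] with y hy using hFH (Ioo_subset_Ico_self hy)
  · rw [← nhdsWithin_Ico_eq_nhdsLT one_pos]
    exact ((hcdf 1 ⟨zero_le_one, le_rfl⟩).mono Ico_subset_Icc_self).tendsto.congr'
      (eventually_nhdsWithin_of_forall fun z hz => (hFH hz).symm)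
  · rw [← integral_one_sub_cdf hbpos hd1 hb'cont]
    exact intervalIntegral.integral_congr_Ioo_of_le zero_le_one fun s hs => by
      rw [hFH (Ioo_subset_Ico_self hs)]

/-- For a twice continuously differentiable inner function
`b : [0,1] → (0,∞)` with `b 0 ≠ b 1` satisfying condition (i) or (ii) of the
logarithmic linked exposure family, the function `F_Z z = 1 - (b' z / b' 0)(b 0 / b z)`
for `z ∈ [0,1)`, `F_Z 1 = 1`, is a distribution function on `[0,1]` with density
`f_Z z = (b 0 / (-b' 0)) (b'' z b z - (b' z)²)/(b z)² ≥ 0` on `(0,1)`, point mass at `1`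
equal to `(b' 1 / b' 0)(b 0 / b 1)` (i.e. left limit `1 - (b' 1 / b' 0)(b 0 / b 1)`),
and mean `∫₀¹ (1 - F_Z s) ds = (b 0 / (-b' 0)) log (b 0 / b 1)`. -/
theorem statement11 (b b' b'' F : ℝ → ℝ)
    (hbpos : ∀ z ∈ Set.Icc (0:ℝ) 1, 0 < b z)
    (hd1 : ∀ z ∈ Set.Icc (0:ℝ) 1, HasDerivWithinAt b (b' z) (Set.Icc 0 1) z)
    (hd2 : ∀ z ∈ Set.Icc (0:ℝ) 1, HasDerivWithinAt b' (b'' z) (Set.Icc 0 1) z)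
    (hcont : ContinuousOn b'' (Set.Icc 0 1))
    (hne : b 0 ≠ b 1)
    (hcond : (0 < b' 0 ∧ (∀ z ∈ Set.Icc (0:ℝ) 1, 0 ≤ b' z) ∧
                (∀ z ∈ Set.Icc (0:ℝ) 1, b'' z * b z - (b' z) ^ 2 ≤ 0)) ∨
             (b' 0 < 0 ∧ (∀ z ∈ Set.Icc (0:ℝ) 1, b' z ≤ 0) ∧
                (∀ z ∈ Set.Icc (0:ℝ) 1, 0 ≤ b'' z * b z - (b' z) ^ 2)))
    (hF : ∀ z ∈ Set.Ico (0:ℝ) 1, F z = 1 - b' z / b' 0 * (b 0 / b z))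
    (hF1 : F 1 = 1) :
    MonotoneOn F (Set.Icc 0 1) ∧
    (∀ z ∈ Set.Icc (0:ℝ) 1, F z ∈ Set.Icc (0:ℝ) 1) ∧
    ContinuousOn F (Set.Ico 0 1) ∧
    F 0 = 0 ∧ F 1 = 1 ∧
    (∀ z ∈ Set.Ioo (0:ℝ) 1,
      HasDerivAt F (b 0 / (-(b' 0)) * ((b'' z * b z - (b' z) ^ 2) / (b z) ^ 2)) z ∧
      0 ≤ b 0 / (-(b' 0)) * ((b'' z * b z - (b' z) ^ 2) / (b z) ^ 2)) ∧
    Filter.Tendsto F (nhdsWithin 1 (Set.Iio 1))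
      (nhds (1 - b' 1 / b' 0 * (b 0 / b 1))) ∧
    (∫ s in (0:ℝ)..1, (1 - F s)) = b 0 / (-(b' 0)) * Real.log (b 0 / b 1) :=
  statement11_general b b' b'' F hbpos hd1 hd2 hcond hF hF1
end

section
/- Let b:[0,1]→ℝ be twice continuously differentiable with b(0) ≠ b(1), and define G:[0,1]→ℝ by G(z) = (e^{b(z)} − e^{b(0)}) / (e^{b(1)} − e^{b(0)}). Then G is an exposure curve (twice continuously differentiable, non-decreasing, concave, G(0)=0, G(1)=1, G'(0)>0) if and only if one of the following two conditions holds: (i) b'(0) > 0, b'(z) ≥ 0 for all z ∈ [0,1], and b''(z) + b'(z)² ≤ 0 for all z ∈ [0,1]; or (ii) b'(0) < 0, b'(z) ≤ 0 for all z ∈ [0,1], and b''(z) + b'(z)² ≥ 0 for all z ∈ [0,1]. -/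
open Set Filter Topology

lemma aux_deriv_nonneg {f : ℝ → ℝ} {d z : ℝ} (hz : z ∈ Set.Icc (0:ℝ) 1)
    (hm : MonotoneOn f (Set.Icc 0 1)) (hd : HasDerivWithinAt f d (Set.Icc 0 1) z) :
    0 ≤ d := by
  rw [hasDerivWithinAt_iff_tendsto_slope] at hd
  have hne : (𝓝[Set.Icc (0:ℝ) 1 \ {z}] z).NeBot := by
    rw [← mem_closure_iff_nhdsWithin_neBot]
    rcases lt_or_eq_of_le hz.2 with h1 | h1
    · refine closure_mono (show Set.Ioo z 1 ⊆ Set.Icc 0 1 \ {z} from ?_) ?_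
      · exact fun y hy => ⟨⟨hz.1.trans hy.1.le, hy.2.le⟩, hy.1.ne'⟩
      · rw [closure_Ioo h1.ne]; exact ⟨le_refl z, h1.le⟩
    · refine closure_mono (show Set.Ioo 0 z ⊆ Set.Icc 0 1 \ {z} from ?_) ?_
      · exact fun y hy => ⟨⟨hy.1.le, hy.2.le.trans hz.2⟩, hy.2.ne⟩
      · rw [closure_Ioo (by rw [h1]; norm_num : (0:ℝ) ≠ z)]
        exact ⟨hz.1, le_refl z⟩
  refine ge_of_tendsto hd ?_
  filter_upwards [self_mem_nhdsWithin] with y hy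
  obtain ⟨hy1, hy2⟩ := hy
  rw [slope_def_field]
  rcases lt_or_gt_of_ne (show y ≠ z from hy2) with h | h
  · rw [div_nonneg_iff]
    exact Or.inr ⟨sub_nonpos.mpr (hm hy1 hz h.le), sub_nonpos.mpr h.le⟩
  · exact div_nonneg (sub_nonneg.mpr (hm hz hy1 h.le)) (sub_nonneg.mpr h.le)

lemma aux_deriv_nonpos {f : ℝ → ℝ} {d z : ℝ} (hz : z ∈ Set.Icc (0:ℝ) 1)
    (hm : AntitoneOn f (Set.Icc 0 1)) (hd : HasDerivWithinAt f d (Set.Icc 0 1) z) :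
    d ≤ 0 := by
  have := aux_deriv_nonneg hz (hm.neg) hd.neg
  linarith



/-- For a twice continuously differentiable inner function
`b : [0,1] → ℝ` with `b 0 ≠ b 1`, the exponentially linked curve
`G z = (e^(b z) - e^(b 0)) / (e^(b 1) - e^(b 0))` is an exposure curve if and only if
(i) `b' 0 > 0`, `b' ≥ 0` and `b'' + (b')² ≤ 0` on `[0,1]`, or (ii) `b' 0 < 0`,
`b' ≤ 0` and `b'' + (b')² ≥ 0` on `[0,1]`. -/
theorem statement12 (b b' b'' : ℝ → ℝ)
    (hd1 : ∀ z ∈ Set.Icc (0:ℝ) 1, HasDerivWithinAt b (b' z) (Set.Icc 0 1) z)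
    (hd2 : ∀ z ∈ Set.Icc (0:ℝ) 1, HasDerivWithinAt b' (b'' z) (Set.Icc 0 1) z)
    (hcont : ContinuousOn b'' (Set.Icc 0 1))
    (hne : b 0 ≠ b 1) :
    IsExposureCurve
        (fun z => (Real.exp (b z) - Real.exp (b 0)) / (Real.exp (b 1) - Real.exp (b 0)))
      ↔ ((0 < b' 0 ∧ (∀ z ∈ Set.Icc (0:ℝ) 1, 0 ≤ b' z) ∧
            (∀ z ∈ Set.Icc (0:ℝ) 1, b'' z + (b' z) ^ 2 ≤ 0)) ∨
         (b' 0 < 0 ∧ (∀ z ∈ Set.Icc (0:ℝ) 1, b' z ≤ 0) ∧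
            (∀ z ∈ Set.Icc (0:ℝ) 1, 0 ≤ b'' z + (b' z) ^ 2))) := by
  set c : ℝ := Real.exp (b 1) - Real.exp (b 0) with hcdef
  have hc0 : c ≠ 0 :=
    sub_ne_zero.mpr (fun h => hne (Real.exp_eq_exp.mp h).symm)
  set F' : ℝ → ℝ := fun z => Real.exp (b z) * b' z / c with hF'def
  set F'' : ℝ → ℝ := fun z => (Real.exp (b z) * b' z * b' z + Real.exp (b z) * b'' z) / c
    with hF''def
  have hF' : ∀ z ∈ Set.Icc (0:ℝ) 1,
      HasDerivWithinAt (fun z => (Real.exp (b z) - Real.exp (b 0)) / c) (F' z)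
        (Set.Icc 0 1) z := fun z hz => (((hd1 z hz).exp).sub_const _).div_const c
  have hF'' : ∀ z ∈ Set.Icc (0:ℝ) 1,
      HasDerivWithinAt F' (F'' z) (Set.Icc 0 1) z := fun z hz =>
    (((hd1 z hz).exp).mul (hd2 z hz)).div_const c
  have hU : UniqueDiffOn ℝ (Set.Icc (0:ℝ) 1) := uniqueDiffOn_Icc (by norm_num)
  have hbc : ContinuousOn b (Set.Icc 0 1) := fun z hz => (hd1 z hz).continuousWithinAt
  have hb'c : ContinuousOn b' (Set.Icc 0 1) := fun z hz => (hd2 z hz).continuousWithinAt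
  have hGc : ContinuousOn (fun z => (Real.exp (b z) - Real.exp (b 0)) / c) (Set.Icc 0 1) :=
    fun z hz => (hF' z hz).continuousWithinAt
  have hF''c : ContinuousOn F'' (Set.Icc 0 1) := by
    rw [hF''def]
    exact ((((Real.continuous_exp.comp_continuousOn hbc).mul hb'c).mul hb'c).add
      ((Real.continuous_exp.comp_continuousOn hbc).mul hcont)).div_const c
  constructor
  · rintro ⟨hmono, hconc, -, -, G', G'', hG'd, hG''d, -, hG'0⟩
    have hGF : ∀ z ∈ Set.Icc (0:ℝ) 1, G' z = F' z := fun z hz => by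
      rw [← (hG'd z hz).derivWithin (hU z hz), (hF' z hz).derivWithin (hU z hz)]
    have h1 : ∀ z ∈ Set.Icc (0:ℝ) 1, 0 ≤ F' z :=
      fun z hz => aux_deriv_nonneg hz hmono (hF' z hz)
    have hdiff : DifferentiableOn ℝ (fun z => (Real.exp (b z) - Real.exp (b 0)) / c)
        (Set.Icc 0 1) := fun z hz => (hF' z hz).differentiableWithinAt
    have hanti : AntitoneOn F' (Set.Icc 0 1) := by
      intro x hx y hy hxy
      have h := hconc.antitoneOn_derivWithin hdiff hx hy hxy
      rwa [(hF' x hx).derivWithin (hU x hx), (hF' y hy).derivWithin (hU y hy)] at h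
    have h2 : ∀ z ∈ Set.Icc (0:ℝ) 1, F'' z ≤ 0 :=
      fun z hz => aux_deriv_nonpos hz hanti (hF'' z hz)
    have h0 : 0 < F' 0 := by
      rw [← hGF 0 ⟨le_refl 0, by norm_num⟩]; exact hG'0
    have h0' : 0 < Real.exp (b 0) * b' 0 / c := h0
    have h1' : ∀ z ∈ Set.Icc (0:ℝ) 1, 0 ≤ Real.exp (b z) * b' z / c := h1
    have h2' : ∀ z ∈ Set.Icc (0:ℝ) 1,
        (Real.exp (b z) * b' z * b' z + Real.exp (b z) * b'' z) / c ≤ 0 := h2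
    rcases hc0.lt_or_gt with hcneg | hcpos
    · refine Or.inr ⟨?_, ?_, ?_⟩
      · rw [div_pos_iff] at h0'
        rcases h0' with ⟨h, h'⟩ | ⟨h, h'⟩
        · linarith
        · nlinarith [Real.exp_pos (b 0)]
      · intro z hz
        have h := h1' z hz
        rw [div_nonneg_iff] at h
        rcases h with ⟨h, h'⟩ | ⟨h, h'⟩
        · linarith
        · nlinarith [Real.exp_pos (b z)]
      · intro z hz
        have h := h2' z hz
        rw [div_nonpos_iff] at h
        rcases h with ⟨h, h'⟩ | ⟨h, h'⟩
        · nlinarith [Real.exp_pos (b z)]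
        · linarith
    · refine Or.inl ⟨?_, ?_, ?_⟩
      · rw [div_pos_iff] at h0'
        rcases h0' with ⟨h, h'⟩ | ⟨h, h'⟩
        · nlinarith [Real.exp_pos (b 0)]
        · linarith
      · intro z hz
        have h := h1' z hz
        rw [div_nonneg_iff] at h
        rcases h with ⟨h, h'⟩ | ⟨h, h'⟩
        · nlinarith [Real.exp_pos (b z)]
        · linarith
      · intro z hz
        have h := h2' z hz
        rw [div_nonpos_iff] at h
        rcases h with ⟨h, h'⟩ | ⟨h, h'⟩
        · linarith
        · nlinarith [Real.exp_pos (b z)]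
  · rintro (⟨hb0, hb'nn, hbb⟩ | ⟨hb0, hb'np, hbb⟩)
    · -- case (i): c > 0
      have hbmono : MonotoneOn b (Set.Icc 0 1) :=
        monotoneOn_of_hasDerivWithinAt_nonneg (convex_Icc 0 1) hbc
          (fun x hx => (hd1 x (interior_subset hx)).mono interior_subset)
          (fun x hx => hb'nn x (interior_subset hx))
      have hble : b 0 ≤ b 1 :=
        hbmono ⟨le_refl 0, by norm_num⟩ ⟨by norm_num, le_refl 1⟩ zero_le_one
      have hcpos : 0 < c :=
        sub_pos.mpr (Real.exp_lt_exp.mpr (lt_of_le_of_ne hble hne))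
      have hF'nn : ∀ x ∈ Set.Icc (0:ℝ) 1, 0 ≤ F' x := fun x hx =>
        div_nonneg (mul_nonneg (Real.exp_pos _).le (hb'nn x hx)) hcpos.le
      have hF''np : ∀ x ∈ Set.Icc (0:ℝ) 1, F'' x ≤ 0 := fun x hx => by
        have h := hbb x hx
        have hE := Real.exp_pos (b x)
        refine div_nonpos_of_nonpos_of_nonneg ?_ hcpos.le
        nlinarith
      refine ⟨?_, ?_, ?_, ?_, F', F'', hF', hF'', hF''c, ?_⟩
      · exact monotoneOn_of_hasDerivWithinAt_nonneg (convex_Icc 0 1) hGc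
          (fun x hx => (hF' x (interior_subset hx)).mono interior_subset)
          (fun x hx => hF'nn x (interior_subset hx))
      · exact concaveOn_of_hasDerivWithinAt2_nonpos (convex_Icc 0 1) hGc
          (fun x hx => (hF' x (interior_subset hx)).mono interior_subset)
          (fun x hx => (hF'' x (interior_subset hx)).mono interior_subset)
          (fun x hx => hF''np x (interior_subset hx))
      · simp
      · show (Real.exp (b 1) - Real.exp (b 0)) / c = 1
        rw [← hcdef]; exact div_self hc0
      · exact div_pos (mul_pos (Real.exp_pos _) hb0) hcpos
    · -- case (ii): c < 0
      have hbanti : AntitoneOn b (Set.Icc 0 1) :=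
        antitoneOn_of_hasDerivWithinAt_nonpos (convex_Icc 0 1) hbc
          (fun x hx => (hd1 x (interior_subset hx)).mono interior_subset)
          (fun x hx => hb'np x (interior_subset hx))
      have hble : b 1 ≤ b 0 :=
        hbanti ⟨le_refl 0, by norm_num⟩ ⟨by norm_num, le_refl 1⟩ zero_le_one
      have hcneg : c < 0 :=
        sub_neg.mpr (Real.exp_lt_exp.mpr (lt_of_le_of_ne hble (Ne.symm hne)))
      have hF'nn : ∀ x ∈ Set.Icc (0:ℝ) 1, 0 ≤ F' x := fun x hx => by
        rw [div_nonneg_iff]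
        exact Or.inr ⟨mul_nonpos_of_nonneg_of_nonpos (Real.exp_pos _).le (hb'np x hx),
          hcneg.le⟩
      have hF''np : ∀ x ∈ Set.Icc (0:ℝ) 1, F'' x ≤ 0 := fun x hx => by
        have h := hbb x hx
        have hE := Real.exp_pos (b x)
        refine div_nonpos_of_nonneg_of_nonpos ?_ hcneg.le
        nlinarith
      refine ⟨?_, ?_, ?_, ?_, F', F'', hF', hF'', hF''c, ?_⟩
      · exact monotoneOn_of_hasDerivWithinAt_nonneg (convex_Icc 0 1) hGc
          (fun x hx => (hF' x (interior_subset hx)).mono interior_subset)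
          (fun x hx => hF'nn x (interior_subset hx))
      · exact concaveOn_of_hasDerivWithinAt2_nonpos (convex_Icc 0 1) hGc
          (fun x hx => (hF' x (interior_subset hx)).mono interior_subset)
          (fun x hx => (hF'' x (interior_subset hx)).mono interior_subset)
          (fun x hx => hF''np x (interior_subset hx))
      · simp
      · show (Real.exp (b 1) - Real.exp (b 0)) / c = 1
        rw [← hcdef]; exact div_self hc0
      · exact div_pos_of_neg_of_neg
          (mul_neg_of_pos_of_neg (Real.exp_pos _) hb0) hcneg
end

section
/- Let b:[0,1]→ℝ be twice continuously differentiable with b(0) ≠ b(1), satisfying either (i) b'(0) > 0, b' ≥ 0 on [0,1] and b'' + (b')² ≤ 0 on [0,1], or (ii) b'(0) < 0, b' ≤ 0 on [0,1] and b'' + (b')² ≥ 0 on [0,1]. Define F_Z:[0,1]→ℝ by F_Z(z) = 1 − e^{b(z)−b(0)} · b'(z)/b'(0) for z ∈ [0,1) and F_Z(1) = 1. Then F_Z is a distribution function on [0,1] (non-decreasing, valued in [0,1], continuous on [0,1), F_Z(0)=0, F_Z(1)=1), with derivative on (0,1) equal to f_Z(z) = −e^{b(z)−b(0)} (b'(z)²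 + b''(z))/b'(0) ≥ 0, point mass at 1 equal to p = 1 − lim_{z→1⁻} F_Z(z) = e^{b(1)−b(0)} b'(1)/b'(0), and mean ∫₀¹ (1 − F_Z(s)) ds = (e^{b(1)−b(0)} − 1)/b'(0). -/
/-- For a twice continuously differentiable inner function
`b : [0,1] → ℝ` with `b 0 ≠ b 1` satisfying condition (i) or (ii) of the exponentially
linked exposure family, the function `F_Z z = 1 - e^(b z - b 0) b' z / b' 0` for
`z ∈ [0,1)`, `F_Z 1 = 1`, is a distribution function on `[0,1]` with density
`f_Z z = -e^(b z - b 0)(b' z² + b'' z)/b' 0 ≥ 0` on `(0,1)`, point mass at `1` equal to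
`e^(b 1 - b 0) b' 1 / b' 0` (i.e. left limit `1 - e^(b 1 - b 0) b' 1 / b' 0`), and mean
`∫₀¹ (1 - F_Z s) ds = (e^(b 1 - b 0) - 1)/b' 0`. -/
theorem statement13 (b b' b'' F : ℝ → ℝ)
    (hd1 : ∀ z ∈ Set.Icc (0:ℝ) 1, HasDerivWithinAt b (b' z) (Set.Icc 0 1) z)
    (hd2 : ∀ z ∈ Set.Icc (0:ℝ) 1, HasDerivWithinAt b' (b'' z) (Set.Icc 0 1) z)
    (hcont : ContinuousOn b'' (Set.Icc 0 1))
    (hne : b 0 ≠ b 1)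
    (hcond : (0 < b' 0 ∧ (∀ z ∈ Set.Icc (0:ℝ) 1, 0 ≤ b' z) ∧
                (∀ z ∈ Set.Icc (0:ℝ) 1, b'' z + (b' z) ^ 2 ≤ 0)) ∨
             (b' 0 < 0 ∧ (∀ z ∈ Set.Icc (0:ℝ) 1, b' z ≤ 0) ∧
                (∀ z ∈ Set.Icc (0:ℝ) 1, 0 ≤ b'' z + (b' z) ^ 2)))
    (hF : ∀ z ∈ Set.Ico (0:ℝ) 1, F z = 1 - Real.exp (b z - b 0) * (b' z / b' 0))
    (hF1 : F 1 = 1) :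
    MonotoneOn F (Set.Icc 0 1) ∧
    (∀ z ∈ Set.Icc (0:ℝ) 1, F z ∈ Set.Icc (0:ℝ) 1) ∧
    ContinuousOn F (Set.Ico 0 1) ∧
    F 0 = 0 ∧ F 1 = 1 ∧
    (∀ z ∈ Set.Ioo (0:ℝ) 1,
      HasDerivAt F (-Real.exp (b z - b 0) * (((b' z) ^ 2 + b'' z) / b' 0)) z ∧
      0 ≤ -Real.exp (b z - b 0) * (((b' z) ^ 2 + b'' z) / b' 0)) ∧
    Filter.Tendsto F (nhdsWithin 1 (Set.Iio 1))
      (nhds (1 - Real.exp (b 1 - b 0) * (b' 1 / b' 0))) ∧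
    (∫ s in (0:ℝ)..1, (1 - F s)) = (Real.exp (b 1 - b 0) - 1) / b' 0 := by
  have hb'0 : b' 0 ≠ 0 := by
    rcases hcond with ⟨h, _⟩ | ⟨h, _⟩
    · exact ne_of_gt h
    · exact ne_of_lt h
  set g : ℝ → ℝ := fun z => Real.exp (b z - b 0) * (b' z / b' 0) with hg_def
  -- derivative of g
  have hg : ∀ z ∈ Set.Icc (0:ℝ) 1,
      HasDerivWithinAt g (Real.exp (b z - b 0) * (((b' z) ^ 2 + b'' z) / b' 0))
        (Set.Icc 0 1) z := by
    intro z hz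
    have h1 : HasDerivWithinAt (fun z => Real.exp (b z - b 0))
        (Real.exp (b z - b 0) * b' z) (Set.Icc 0 1) z :=
      (((hd1 z hz).sub_const (b 0)).exp)
    have h2 : HasDerivWithinAt (fun z => Real.exp (b z - b 0) * b' z)
        (Real.exp (b z - b 0) * b' z * b' z + Real.exp (b z - b 0) * b'' z)
        (Set.Icc 0 1) z := h1.mul (hd2 z hz)
    have h3 := h2.div_const (b' 0)
    have : (Real.exp (b z - b 0) * b' z * b' z + Real.exp (b z - b 0) * b'' z) / b' 0
        = Real.exp (b z - b 0) * (((b' z) ^ 2 + b'' z) / b' 0) := by ring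
    rw [this] at h3
    refine h3.congr (fun x _ => ?_) ?_ <;> simp [hg_def, mul_div_assoc]
  -- continuity of g
  have hgcont : ContinuousOn g (Set.Icc 0 1) := fun z hz =>
    (hg z hz).continuousWithinAt
  -- sign of derivative
  have hderiv_nonpos : ∀ z ∈ Set.Icc (0:ℝ) 1,
      Real.exp (b z - b 0) * (((b' z) ^ 2 + b'' z) / b' 0) ≤ 0 := by
    intro z hz
    rcases hcond with ⟨h0, _, hsum⟩ | ⟨h0, _, hsum⟩
    · have := hsum z hz
      have : ((b' z) ^ 2 + b'' z) / b' 0 ≤ 0 :=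
        div_nonpos_iff.2 (Or.inr ⟨by linarith, le_of_lt h0⟩)
      exact mul_nonpos_of_nonneg_of_nonpos (Real.exp_pos _).le this
    · have := hsum z hz
      have : ((b' z) ^ 2 + b'' z) / b' 0 ≤ 0 :=
        div_nonpos_iff.2 (Or.inl ⟨by linarith, le_of_lt h0⟩)
      exact mul_nonpos_of_nonneg_of_nonpos (Real.exp_pos _).le this
  -- g nonneg
  have hgnonneg : ∀ z ∈ Set.Icc (0:ℝ) 1, 0 ≤ g z := by
    intro z hz
    rcases hcond with ⟨h0, hb', _⟩ | ⟨h0, hb', _⟩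
    · exact mul_nonneg (Real.exp_pos _).le (div_nonneg (hb' z hz) h0.le)
    · exact mul_nonneg (Real.exp_pos _).le (div_nonneg_of_nonpos (hb' z hz) h0.le)
  have hg0 : g 0 = 1 := by simp [hg_def, div_self hb'0]
  -- g antitone
  have hganti : AntitoneOn g (Set.Icc 0 1) := by
    refine antitoneOn_of_hasDerivWithinAt_nonpos (convex_Icc 0 1) hgcont
      (f' := fun z => Real.exp (b z - b 0) * (((b' z) ^ 2 + b'' z) / b' 0)) ?_ ?_
    · intro x hx
      rw [interior_Icc] at hx ⊢
      exact (hg x (Set.Ioo_subset_Icc_self hx)).mono Set.Ioo_subset_Icc_self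
    · intro x hx
      rw [interior_Icc] at hx
      exact hderiv_nonpos x (Set.Ioo_subset_Icc_self hx)
  have hgle1 : ∀ z ∈ Set.Icc (0:ℝ) 1, g z ≤ 1 := by
    intro z hz
    have := hganti (Set.left_mem_Icc.2 zero_le_one) hz hz.1
    rwa [hg0] at this
  -- main parts
  have hmono : MonotoneOn F (Set.Icc 0 1) := by
    intro x hx y hy hxy
    rcases eq_or_lt_of_le hy.2 with hy1 | hy1
    · rw [hy1, hF1]
      rcases eq_or_lt_of_le hx.2 with hx1 | hx1
      · rw [hx1, hF1]
      · rw [hF x ⟨hx.1, hx1⟩]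
        have := hgnonneg x hx
        simp only [hg_def] at this
        linarith
    · rw [hF x ⟨hx.1, lt_of_le_of_lt hxy hy1⟩, hF y ⟨hy.1, hy1⟩]
      have := hganti hx hy hxy
      simp only [hg_def] at this
      linarith
  have hmem : ∀ z ∈ Set.Icc (0:ℝ) 1, F z ∈ Set.Icc (0:ℝ) 1 := by
    intro z hz
    rcases eq_or_lt_of_le hz.2 with hz1 | hz1
    · rw [hz1, hF1]; exact ⟨zero_le_one, le_refl 1⟩
    · rw [hF z ⟨hz.1, hz1⟩]
      have h1 := hgnonneg z hz
      have h2 := hgle1 z hz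
      simp only [hg_def] at h1 h2
      constructor <;> [linarith; linarith]
  have hcontF : ContinuousOn F (Set.Ico 0 1) := by
    have : ContinuousOn (fun z => 1 - g z) (Set.Ico 0 1) :=
      (continuousOn_const.sub hgcont).mono (Set.Ico_subset_Icc_self)
    exact this.congr (fun z hz => hF z hz)
  have hF0 : F 0 = 0 := by
    rw [hF 0 ⟨le_refl 0, zero_lt_one⟩]
    simp [div_self hb'0]
  have hderivF : ∀ z ∈ Set.Ioo (0:ℝ) 1,
      HasDerivAt F (-Real.exp (b z - b 0) * (((b' z) ^ 2 + b'' z) / b' 0)) z ∧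
      0 ≤ -Real.exp (b z - b 0) * (((b' z) ^ 2 + b'' z) / b' 0) := by
    intro z hz
    have hmemN : Set.Icc (0:ℝ) 1 ∈ nhds z :=
      Filter.mem_of_superset (Ioo_mem_nhds hz.1 hz.2) Set.Ioo_subset_Icc_self
    have hgd : HasDerivAt g (Real.exp (b z - b 0) * (((b' z) ^ 2 + b'' z) / b' 0)) z :=
      (hg z (Set.Ioo_subset_Icc_self hz)).hasDerivAt hmemN
    have hFd : HasDerivAt (fun z => 1 - g z)
        (-(Real.exp (b z - b 0) * (((b' z) ^ 2 + b'' z) / b' 0))) z := hgd.const_sub 1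
    have heq : F =ᶠ[nhds z] fun z => 1 - g z := by
      filter_upwards [Ioo_mem_nhds hz.1 hz.2] with x hx
      exact hF x ⟨hx.1.le, hx.2⟩
    refine ⟨?_, ?_⟩
    · have := hFd.congr_of_eventuallyEq heq
      simpa [neg_mul] using this
    · have := hderiv_nonpos z (Set.Ioo_subset_Icc_self hz)
      have h := neg_nonneg.2 this
      simpa [neg_mul] using h
  have hlim : Filter.Tendsto F (nhdsWithin 1 (Set.Iio 1))
      (nhds (1 - Real.exp (b 1 - b 0) * (b' 1 / b' 0))) := by
    have hnhds : nhdsWithin (1:ℝ) (Set.Ioo 0 1) = nhdsWithin 1 (Set.Iio 1) :=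
      nhdsWithin_Ioo_eq_nhdsLT zero_lt_one
    have hgc : Filter.Tendsto g (nhdsWithin 1 (Set.Icc 0 1)) (nhds (g 1)) :=
      hgcont 1 (Set.right_mem_Icc.2 zero_le_one)
    have hgc' : Filter.Tendsto g (nhdsWithin 1 (Set.Iio 1)) (nhds (g 1)) := by
      rw [← hnhds]
      exact hgc.mono_left (nhdsWithin_mono 1 Set.Ioo_subset_Icc_self)
    have : Filter.Tendsto (fun z => 1 - g z) (nhdsWithin 1 (Set.Iio 1))
        (nhds (1 - g 1)) := tendsto_const_nhds.sub hgc'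
    refine this.congr' ?_
    rw [← hnhds]
    filter_upwards [self_mem_nhdsWithin] with x hx
    exact (hF x ⟨hx.1.le, hx.2⟩).symm
  have hint : (∫ s in (0:ℝ)..1, (1 - F s)) = (Real.exp (b 1 - b 0) - 1) / b' 0 := by
    have hIg : (∫ s in (0:ℝ)..1, g s)
        = Real.exp (b 1 - b 0) / b' 0 - Real.exp (b 0 - b 0) / b' 0 := by
      apply intervalIntegral.integral_eq_sub_of_hasDeriv_right_of_le (f := fun z => Real.exp (b z - b 0) / b' 0) zero_le_one
      · have hbcont : ContinuousOn b (Set.Icc 0 1) := fun z hz => (hd1 z hz).continuousWithinAt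
        exact (Real.continuous_exp.comp_continuousOn
          (hbcont.sub continuousOn_const)).div_const _
      · intro x hx
        have hmemN : Set.Icc (0:ℝ) 1 ∈ nhds x :=
          Filter.mem_of_superset (Ioo_mem_nhds hx.1 hx.2) Set.Ioo_subset_Icc_self
        have h1 : HasDerivAt (fun z => Real.exp (b z - b 0) / b' 0)
            (Real.exp (b x - b 0) * b' x / b' 0) x :=
          ((((hd1 x (Set.Ioo_subset_Icc_self hx)).sub_const (b 0)).exp).div_const
            (b' 0)).hasDerivAt hmemN
        have : Real.exp (b x - b 0) * b' x / b' 0 = g x := by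
          simp [hg_def, mul_div_assoc]
        rw [this] at h1
        exact h1.hasDerivWithinAt
      · apply ContinuousOn.intervalIntegrable
        rwa [Set.uIcc_of_le zero_le_one]
    have hcongr : (∫ s in (0:ℝ)..1, (1 - F s)) = ∫ s in (0:ℝ)..1, g s := by
      apply intervalIntegral.integral_congr_ae
      have h1 : ∀ᵐ x : ℝ, x ≠ (1:ℝ) := by
        rw [MeasureTheory.ae_iff]
        simp only [ne_eq, not_not, Set.setOf_eq_eq_singleton]
        exact Real.volume_singleton
      filter_upwards [h1] with x hx hxI
      rw [Set.uIoc_of_le zero_le_one] at hxI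
      have hxIco : x ∈ Set.Ico (0:ℝ) 1 := ⟨hxI.1.le, lt_of_le_of_ne hxI.2 hx⟩
      rw [hF x hxIco]
      simp [hg_def]
    rw [hcongr, hIg]
    simp only [sub_self, Real.exp_zero]
    ring
  exact ⟨hmono, hmem, hcontF, hF0, hF1, hderivF, hlim, hint⟩
end

section
/- Let α > 1, δ > 1 and a > 1/(δ−1), and define b:[0,1]→(0,∞) by b(z) = (1 − z/α)^δ + a. Then b is twice continuously differentiable with b(0) ≠ b(1), b'(z) = −(δ/α)(1 − z/α)^{δ−1} < 0 for all z ∈ [0,1], and b''(z)b(z) − b'(z)² > 0 for all z ∈ [0,1]; in particular b satisfies the conditions under which G(z) = (log b(z) − log b(0))/(log b(1) − log b(0)) is an exposure curve, so the power logarithmic linked exposure example defines a well-defined distribution. -/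
open Set Real

lemma IsExposureCurve.of_hasDerivWithinAt {G G' G'' : ℝ → ℝ}
    (hG : ∀ z ∈ Icc (0:ℝ) 1, HasDerivWithinAt G (G' z) (Icc 0 1) z)
    (hG' : ∀ z ∈ Icc (0:ℝ) 1, HasDerivWithinAt G' (G'' z) (Icc 0 1) z)
    (hG''_cont : ContinuousOn G'' (Icc 0 1)) (h0 : G 0 = 0) (h1 : G 1 = 1)
    (hG'_nonneg : ∀ z ∈ Icc (0:ℝ) 1, 0 ≤ G' z) (hG''_nonpos : ∀ z ∈ Icc (0:ℝ) 1, G'' z ≤ 0)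
    (hG'_zero : 0 < G' 0) : IsExposureCurve G := by
  have hcont : ContinuousOn G (Icc 0 1) := fun z hz => (hG z hz).continuousWithinAt
  have hderiv : ∀ z ∈ interior (Icc (0:ℝ) 1),
      HasDerivWithinAt G (G' z) (interior (Icc 0 1)) z :=
    fun z hz => (hG z (interior_subset hz)).mono interior_subset
  refine ⟨monotoneOn_of_hasDerivWithinAt_nonneg (convex_Icc 0 1) hcont hderiv
      fun z hz => hG'_nonneg z (interior_subset hz),
    concaveOn_of_hasDerivWithinAt2_nonpos (convex_Icc 0 1) hcont hderiv
      (fun z hz => (hG' z (interior_subset hz)).mono interior_subset)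
      fun z hz => hG''_nonpos z (interior_subset hz),
    h0, h1, G', G'', hG, hG', hG''_cont, hG'_zero⟩

noncomputable def logLinkedCurve (b : ℝ → ℝ) (z : ℝ) : ℝ :=
  (log (b z) - log (b 0)) / (log (b 1) - log (b 0))

theorem isExposureCurve_logLinkedCurve {b b' b'' : ℝ → ℝ}
    (hpos : ∀ z ∈ Icc (0:ℝ) 1, 0 < b z)
    (hb : ∀ z ∈ Icc (0:ℝ) 1, HasDerivWithinAt b (b' z) (Icc 0 1) z)
    (hb' : ∀ z ∈ Icc (0:ℝ) 1, HasDerivWithinAt b' (b'' z) (Icc 0 1) z)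
    (hb''_cont : ContinuousOn b'' (Icc 0 1)) (hb'_nonpos : ∀ z ∈ Icc (0:ℝ) 1, b' z ≤ 0)
    (hb'_zero : b' 0 < 0) (hlogConvex : ∀ z ∈ Icc (0:ℝ) 1, 0 ≤ b'' z * b z - b' z ^ 2)
    (hne : b 0 ≠ b 1) : IsExposureCurve (logLinkedCurve b) := by
  have h0 : (0:ℝ) ∈ Icc 0 1 := ⟨le_rfl, zero_le_one⟩
  have h1 : (1:ℝ) ∈ Icc 0 1 := ⟨zero_le_one, le_rfl⟩
  have hb_cont : ContinuousOn b (Icc 0 1) := fun z hz => (hb z hz).continuousWithinAt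
  have hb'_cont : ContinuousOn b' (Icc 0 1) := fun z hz => (hb' z hz).continuousWithinAt
  have hb_anti : AntitoneOn b (Icc 0 1) :=
    antitoneOn_of_hasDerivWithinAt_nonpos (convex_Icc 0 1) hb_cont
      (fun z hz => (hb z (interior_subset hz)).mono interior_subset)
      fun z hz => hb'_nonpos z (interior_subset hz)
  have hb_lt : b 1 < b 0 := (hb_anti h0 h1 zero_le_one).lt_of_ne hne.symm
  set L := log (b 1) - log (b 0)
  have hL : L < 0 := sub_neg.2 (log_lt_log (hpos 1 h1) hb_lt)
  refine IsExposureCurve.of_hasDerivWithinAt (G' := fun z => b' z / b z / L)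
    (G'' := fun z => (b'' z * b z - b' z ^ 2) / b z ^ 2 / L)
    (fun z hz => (((hb z hz).log (hpos z hz).ne').sub_const _).div_const L)
    (fun z hz => ?_)
    ((((hb''_cont.mul hb_cont).sub (hb'_cont.pow 2)).div (hb_cont.pow 2)
      fun z hz => pow_ne_zero 2 (hpos z hz).ne').div_const L)
    (by simp [logLinkedCurve]) (div_self hL.ne)
    (fun z hz => div_nonneg_of_nonpos (div_nonpos_of_nonpos_of_nonneg (hb'_nonpos z hz)
      (hpos z hz).le) hL.le)
    (fun z hz => div_nonpos_of_nonneg_of_nonpos (div_nonneg (hlogConvex z hz)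
      (sq_nonneg _)) hL.le)
    (div_pos_of_neg_of_neg (div_neg_of_neg_of_pos hb'_zero (hpos 0 h0)) hL)
  exact (((hb' z hz).div (hb z hz) (hpos z hz).ne').div_const L).congr_deriv (by ring)

lemma one_sub_div_mem_Ioc {α z : ℝ} (hα : 1 < α) (hz : z ∈ Icc (0:ℝ) 1) :
    1 - z / α ∈ Ioc 0 1 := by
  have hα0 : 0 < α := by linarith
  have hzα : z / α < 1 := (div_lt_one hα0).2 (by linarith [hz.2])
  exact ⟨by linarith, by linarith [div_nonneg hz.1 hα0.le]⟩

lemma hasDerivAt_one_sub_div_rpow {α z : ℝ} (p : ℝ) (hz : 0 < 1 - z / α) :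
    HasDerivAt (fun y => (1 - y / α) ^ p) (-(p / α) * (1 - z / α) ^ (p - 1)) z :=
  ((((hasDerivAt_id' z).div_const α).const_sub 1).rpow_const (Or.inl hz.ne')).congr_deriv
    (by ring)

lemma hasDerivAt_neg_mul_one_sub_div_rpow {α δ z : ℝ} (hz : 0 < 1 - z / α) :
    HasDerivAt (fun y => -(δ / α) * (1 - y / α) ^ (δ - 1))
      (δ * (δ - 1) / α ^ 2 * (1 - z / α) ^ (δ - 2)) z := by
  refine ((hasDerivAt_one_sub_div_rpow (δ - 1) hz).const_mul (-(δ / α))).congr_deriv ?_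
  rw [sub_sub, one_add_one_eq_two]
  ring

lemma power_inner_one_lt_zero {α δ a : ℝ} (hα : 1 < α) (hδ : 0 < δ) :
    (1 - 1 / α) ^ δ + a < (1 - 0 / α) ^ δ + a := by
  have hα0 : 0 < 1 / α := one_div_pos.2 (by linarith)
  rw [zero_div, sub_zero, one_rpow]
  gcongr
  exact rpow_lt_one (by linarith [(div_lt_one (by linarith)).2 hα]) (by linarith) hδ

lemma power_inner_deriv2_mul_sub_sq_pos {α δ a x : ℝ} (hα : α ≠ 0) (hδ : 1 < δ)
    (ha : 1 < (δ - 1) * a) (hx : x ∈ Ioc (0:ℝ) 1) :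
    0 < δ * (δ - 1) / α ^ 2 * x ^ (δ - 2) * (x ^ δ + a) - (-(δ / α) * x ^ (δ - 1)) ^ 2 := by
  have hsq : (x ^ (δ - 1)) ^ 2 = x ^ (δ - 2) * x ^ δ := by
    rw [← rpow_natCast, ← rpow_mul hx.1.le, ← rpow_add hx.1]
    congr 1
    push_cast
    ring
  have hgap : 0 < (δ - 1) * a - x ^ δ := by
    linarith [rpow_le_one hx.1.le hx.2 (by linarith : 0 ≤ δ)]
  calc 0 < δ / α ^ 2 * x ^ (δ - 2) * ((δ - 1) * a - x ^ δ) := by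
        have := rpow_pos_of_pos hx.1 (δ - 2)
        have : 0 < δ := by linarith
        positivity
    _ = _ := by
        rw [mul_pow, hsq]
        field_simp
        ring

/-- For `α > 1`, `δ > 1` and `a > 1/(δ-1)`, the inner function
`b z = (1 - z/α)^δ + a` is positive and twice continuously differentiable on `[0,1]`
with `b 0 ≠ b 1`, `b' z = -(δ/α)(1 - z/α)^(δ-1) < 0` and
`b'' z b z - (b' z)² > 0` on `[0,1]`; in particular the power logarithmic linked
curve `G z = (log (b z) - log (b 0))/(log (b 1) - log (b 0))` is an exposure curve, so
the power logarithmic linked exposure example defines a well-defined distribution. -/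
theorem statement14 (α δ a : ℝ) (hα : 1 < α) (hδ : 1 < δ) (ha : 1 / (δ - 1) < a) :
    let b : ℝ → ℝ := fun z => (1 - z / α) ^ δ + a
    let b' : ℝ → ℝ := fun z => -(δ / α) * (1 - z / α) ^ (δ - 1)
    let b'' : ℝ → ℝ := fun z => δ * (δ - 1) / α ^ 2 * (1 - z / α) ^ (δ - 2)
    (∀ z ∈ Set.Icc (0:ℝ) 1, 0 < b z) ∧
    b 0 ≠ b 1 ∧
    (∀ z ∈ Set.Icc (0:ℝ) 1, HasDerivWithinAt b (b' z) (Set.Icc 0 1) z) ∧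
    (∀ z ∈ Set.Icc (0:ℝ) 1, HasDerivWithinAt b' (b'' z) (Set.Icc 0 1) z) ∧
    ContinuousOn b'' (Set.Icc 0 1) ∧
    (∀ z ∈ Set.Icc (0:ℝ) 1, b' z < 0) ∧
    (∀ z ∈ Set.Icc (0:ℝ) 1, 0 < b'' z * b z - (b' z) ^ 2) ∧
    IsExposureCurve
      (fun z => (Real.log (b z) - Real.log (b 0)) / (Real.log (b 1) - Real.log (b 0))) := by
  intro b b' b''
  have hα0 : 0 < α := by linarith
  have hδ1 : 0 < δ - 1 := by linarith
  have ha' : 1 < (δ - 1) * a := (div_lt_iff₀' hδ1).1 ha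
  have hbase := fun z (hz : z ∈ Icc (0:ℝ) 1) => one_sub_div_mem_Ioc hα hz
  have hpos : ∀ z ∈ Icc (0:ℝ) 1, 0 < b z := fun z hz =>
    add_pos (rpow_pos_of_pos (hbase z hz).1 δ) (pos_of_mul_pos_right (by linarith) hδ1.le)
  have hne : b 0 ≠ b 1 := (power_inner_one_lt_zero hα (by linarith)).ne'
  have hb := fun z (hz : z ∈ Icc (0:ℝ) 1) =>
    ((hasDerivAt_one_sub_div_rpow δ (hbase z hz).1).add_const a).hasDerivWithinAt (s := Icc 0 1)
  have hb' := fun z (hz : z ∈ Icc (0:ℝ) 1) =>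
    (hasDerivAt_neg_mul_one_sub_div_rpow (δ := δ) (hbase z hz).1).hasDerivWithinAt (s := Icc 0 1)
  have hb''_cont : ContinuousOn b'' (Icc 0 1) :=
    continuousOn_const.mul ((by fun_prop : ContinuousOn (fun z : ℝ => 1 - z / α) _).rpow_const
      fun z hz => Or.inl (hbase z hz).1.ne')
  have hb'_neg : ∀ z ∈ Icc (0:ℝ) 1, b' z < 0 := fun z hz =>
    mul_neg_of_neg_of_pos (neg_neg_of_pos (div_pos (by linarith) hα0))
      (rpow_pos_of_pos (hbase z hz).1 _)
  have hlogConvex := fun z (hz : z ∈ Icc (0:ℝ) 1) =>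
    power_inner_deriv2_mul_sub_sq_pos hα0.ne' hδ ha' (hbase z hz)
  exact ⟨hpos, hne, hb, hb', hb''_cont, hb'_neg, hlogConvex,
    isExposureCurve_logLinkedCurve hpos hb hb' hb''_cont (fun z hz => (hb'_neg z hz).le)
      (hb'_neg 0 ⟨le_rfl, zero_le_one⟩) (fun z hz => (hlogConvex z hz).le) hne⟩
end

section
/- Let β ∈ (−π/2, 0), α ∈ (0, π/2 − β) and −sin(β) < a < −1/sin(β), and define b:[0,1]→ℝ by b(z) = sin(αz + β) + a. Then b maps into (0,∞), is twice continuously differentiable with b(0) ≠ b(1), b'(z) = α cos(αz + β) > 0 for all z ∈ [0,1], and b''(z)b(z) − b'(z)² < 0 for all z ∈ [0,1] (so the sine logarithmic linked exposure example defines a well-defined distribution). Moreover, if the density f_Z(z) = ((sin(β)+a)/cos(β)) · α(1 + a sin(αz + β)) / (sin(αz + β) + a)² has a critical point, i.e. f_Z'(z) = 0 for some z ∈ (0,1), then 1 ≤ a ≤ 2; hence the density can only be unimodal on [0,1) if 1 ≤ a ≤ 2. -/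
/-!
On `[0,1]` the phase `θ = αz + β` stays in `[β, α + β] ⊂ (-π/2, π/2)`, where `sin` is increasing
and `cos` is positive; everything about `b` follows from `sin θ ≥ sin β > -a`. The identity
`b'' b - b'² = -α² (1 + a sin θ)` reduces log-concavity to `1 + a sin β > 0`, i.e. `a < -1/sin β`.
Writing `s = sin θ`, the density is a constant multiple of `(1 + a s)/(s + a)²`, whose
`s`-derivative is `(a² - 2 - a s)/(s + a)³`; so a critical point forces `a² - 2 = a s` with
`|s| ≤ 1`, which pins `a` to `[1, 2]`.
-/

open Real Set

lemma hasDerivAt_one_add_mul_div_add_sq (a s : ℝ) (hs : s + a ≠ 0) :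
    HasDerivAt (fun t => (1 + a * t) / (t + a) ^ 2) ((a ^ 2 - 2 - a * s) / (s + a) ^ 3) s := by
  have hnum : HasDerivAt (fun t => 1 + a * t) a s := by
    simpa using ((hasDerivAt_id s).const_mul a).const_add 1
  have hden : HasDerivAt (fun t => (t + a) ^ 2) (2 * (s + a)) s := by
    simpa using ((hasDerivAt_id s).add_const a).fun_pow 2
  refine (hnum.div hden (pow_ne_zero 2 hs)).congr_deriv ?_
  field_simp
  ring

lemma one_le_and_le_two_of_sq_sub_two_eq_mul {a s : ℝ} (ha : 0 < a) (hs : |s| ≤ 1)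
    (h : a ^ 2 - 2 = a * s) : 1 ≤ a ∧ a ≤ 2 := by
  obtain ⟨hs₁, hs₂⟩ := abs_le.mp hs
  constructor <;> nlinarith

lemma hasDerivAt_const_mul_sin_density (C α β a z : ℝ) (hz : sin (α * z + β) + a ≠ 0) :
    HasDerivAt
      (fun z => C * (α * (1 + a * sin (α * z + β)) / (sin (α * z + β) + a) ^ 2))
      (C * α ^ 2 * cos (α * z + β) * ((a ^ 2 - 2 - a * sin (α * z + β)) /
        (sin (α * z + β) + a) ^ 3)) z := by
  have hphase : HasDerivAt (fun z => α * z + β) α z := by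
    simpa using ((hasDerivAt_id z).const_mul α).add_const β
  have h := ((hasDerivAt_one_add_mul_div_add_sq a _ hz).comp z hphase.sin).const_mul (C * α)
  refine (h.congr_deriv (by ring)).congr_of_eventuallyEq (.of_forall fun y => ?_)
  simp only [Function.comp_apply]
  ring

lemma sq_sub_two_eq_mul_sin_of_hasDerivAt_eq_zero {C α β a z : ℝ} (hC : C ≠ 0) (hα : α ≠ 0)
    (hcos : cos (α * z + β) ≠ 0) (hb : sin (α * z + β) + a ≠ 0)
    (h : HasDerivAt
      (fun z => C * (α * (1 + a * sin (α * z + β)) / (sin (α * z + β) + a) ^ 2)) 0 z) :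
    a ^ 2 - 2 = a * sin (α * z + β) := by
  have := (hasDerivAt_const_mul_sin_density C α β a z hb).unique h
  simpa [hC, hα, hcos, hb, sub_eq_zero] using this

lemma one_add_mul_pos_of_lt_neg_inv {a x : ℝ} (hx : x < 0) (ha : a < -(1 / x)) :
    0 < 1 + a * x := by
  have := mul_lt_mul_of_neg_right ha hx
  rw [neg_mul, one_div, inv_mul_cancel₀ hx.ne] at this
  linarith

lemma sin_mul_add_mul_add_sub_sq (α θ a : ℝ) :
    -(α ^ 2) * sin θ * (sin θ + a) - (α * cos θ) ^ 2 = -(α ^ 2) * (1 + a * sin θ) := by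
  linear_combination (-(α ^ 2)) * sin_sq_add_cos_sq θ

section Phase

variable {α β z : ℝ}

lemma mul_add_mem_Icc (hα : 0 ≤ α) (hz : z ∈ Icc (0 : ℝ) 1) : α * z + β ∈ Icc β (α + β) :=
  ⟨by nlinarith [hz.1], by nlinarith [hz.2]⟩

lemma cos_mul_add_pos (hβ : -(π / 2) < β) (hα : 0 ≤ α) (hαβ : α + β < π / 2)
    (hz : z ∈ Icc (0 : ℝ) 1) : 0 < cos (α * z + β) := by
  obtain ⟨h₁, h₂⟩ := mul_add_mem_Icc (β := β) hα hz
  exact cos_pos_of_mem_Ioo ⟨by linarith, by linarith⟩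

lemma sin_le_sin_mul_add (hβ : -(π / 2) < β) (hα : 0 ≤ α) (hαβ : α + β < π / 2)
    (hz : z ∈ Icc (0 : ℝ) 1) : sin β ≤ sin (α * z + β) := by
  obtain ⟨h₁, h₂⟩ := mul_add_mem_Icc (β := β) hα hz
  exact sin_le_sin_of_le_of_le_pi_div_two hβ.le (by linarith) h₁

end Phase

/-- For `β ∈ (-π/2, 0)`, `α ∈ (0, π/2 - β)` and
`-sin β < a < -1/sin β`, the inner function `b z = sin(αz + β) + a` maps into `(0,∞)`,
is twice continuously differentiable with `b 0 ≠ b 1`,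
`b' z = α cos(αz + β) > 0` and `b'' z b z - (b' z)² < 0` on `[0,1]` (so the sine
logarithmic linked exposure example defines a well-defined distribution). Moreover, if
the density `f_Z z = ((sin β + a)/cos β) α(1 + a sin(αz + β))/(sin(αz + β) + a)²` has a
critical point in `(0,1)`, then `1 ≤ a ≤ 2`; hence the density can only be unimodal on
`[0,1)` if `1 ≤ a ≤ 2`. -/
theorem statement16 (α β a : ℝ)
    (hβ : β ∈ Set.Ioo (-(Real.pi / 2)) 0)
    (hα : α ∈ Set.Ioo 0 (Real.pi / 2 - β))
    (ha1 : -Real.sin β < a) (ha2 : a < -(1 / Real.sin β)) :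
    let b : ℝ → ℝ := fun z => Real.sin (α * z + β) + a
    let b' : ℝ → ℝ := fun z => α * Real.cos (α * z + β)
    let b'' : ℝ → ℝ := fun z => -(α ^ 2) * Real.sin (α * z + β)
    let f : ℝ → ℝ := fun z =>
      (Real.sin β + a) / Real.cos β *
        (α * (1 + a * Real.sin (α * z + β)) / (Real.sin (α * z + β) + a) ^ 2)
    (∀ z ∈ Set.Icc (0:ℝ) 1, 0 < b z) ∧
    b 0 ≠ b 1 ∧
    (∀ z : ℝ, HasDerivAt b (b' z) z) ∧
    (∀ z : ℝ, HasDerivAt b' (b'' z) z) ∧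
    (∀ z ∈ Set.Icc (0:ℝ) 1, 0 < b' z) ∧
    (∀ z ∈ Set.Icc (0:ℝ) 1, b'' z * b z - (b' z) ^ 2 < 0) ∧
    ((∃ z ∈ Set.Ioo (0:ℝ) 1, HasDerivAt f 0 z) → 1 ≤ a ∧ a ≤ 2) := by
  obtain ⟨hβ₁, hβ₂⟩ := hβ
  obtain ⟨hα₀, hαβ⟩ := hα
  replace hαβ : α + β < π / 2 := by linarith
  have hsinβ : sin β < 0 := sin_neg_of_neg_of_neg_pi_lt hβ₂ (by linarith [pi_pos])
  have ha : 0 < a := by linarith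
  have hsin_ge := fun z => sin_le_sin_mul_add (z := z) hβ₁ hα₀.le hαβ
  have hcos_pos := fun z => cos_mul_add_pos (z := z) hβ₁ hα₀.le hαβ
  have hb_pos : ∀ z ∈ Icc (0 : ℝ) 1, 0 < sin (α * z + β) + a :=
    fun z hz => by linarith [hsin_ge z hz]
  have hphase : ∀ z, HasDerivAt (fun z => α * z + β) α z := fun z => by
    simpa using ((hasDerivAt_id z).const_mul α).add_const β
  intro b b' b'' f
  refine ⟨hb_pos, ?_, fun z => ?_, fun z => ?_, fun z hz => mul_pos hα₀ (hcos_pos z hz),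
    fun z hz => ?_, ?_⟩
  · have : sin β < sin (α + β) :=
      sin_lt_sin_of_lt_of_le_pi_div_two hβ₁.le hαβ.le (by linarith)
    simp only [b, mul_zero, zero_add, mul_one]
    linarith
  · simpa [b, b', mul_comm] using (hphase z).sin.add_const a
  · exact ((hphase z).cos.const_mul α).congr_deriv (by ring)
  · have hlog : 0 < 1 + a * sin (α * z + β) := by
      nlinarith [hsin_ge z hz, one_add_mul_pos_of_lt_neg_inv hsinβ ha2]
    simp only [b, b', b'']
    rw [sin_mul_add_mul_add_sub_sq, neg_mul]
    exact neg_neg_of_pos (mul_pos (pow_pos hα₀ 2) hlog)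
  · rintro ⟨z, hz, hcrit⟩
    replace hz : z ∈ Icc (0 : ℝ) 1 := Ioo_subset_Icc_self hz
    have hC : (sin β + a) / cos β ≠ 0 :=
      div_ne_zero (by linarith) (cos_pos_of_mem_Ioo ⟨hβ₁, by linarith⟩).ne'
    exact one_le_and_le_two_of_sq_sub_two_eq_mul ha (abs_sin_le_one _)
      (sq_sub_two_eq_mul_sin_of_hasDerivAt_eq_zero hC hα₀.ne' (hcos_pos z hz).ne'
        (hb_pos z hz).ne' hcrit)
end

section
/- Let α < 0 and β < −√(−2α), and define b:[0,1]→ℝ by b(z) = αz² + βz. Then b'(z) = 2αz + β < 0 and b''(z) + b'(z)² = 2α + (2αz + β)² > 0 for all z ∈ [0,1] (so the quadratic exponentially linked exposure example defines a well-defined distribution). Moreover, the induced density f_Z(z) = −e^{αz² + βz}(4α²z² + 4αβz + β² + 2α)/β on [0,1) is unimodal on [0,1) — i.e. there exists z* ∈ (0,1) with f_Z'(z) > 0 for z ∈ (0, z*) and f_Z'(z) < 0 for z ∈ (z*, 1) — if and only if −√(−6α) < β < −2α − √(−6α). -/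
/-!
With `t z = 2αz + β = b' z`, one computes `f_Z' = e^b · (t/β) · (-(t² + 6α))`. On `[0,1]` the
slope `t` is negative, so `t/β > 0` and `f_Z'` has the sign of `-6α - t²`: it is positive while
`-t < √(-6α)` and negative afterwards. As `t` is strictly decreasing, this happens exactly at the
single point `z* = (β + √(-6α)) / (-2α)`, so unimodality on `(0,1)` means `z* ∈ (0,1)`, which
unwinds to the stated bounds on `β`.
-/

open Real Set

theorem exists_pos_neg_sign_change_iff {g : ℝ → ℝ} {a b c : ℝ}
    (hpos : ∀ z ∈ Ioo a b, 0 < g z ↔ z < c) (hneg : ∀ z ∈ Ioo a b, g z < 0 ↔ c < z) :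
    (∃ zs ∈ Ioo a b, (∀ z ∈ Ioo a zs, 0 < g z) ∧ ∀ z ∈ Ioo zs b, g z < 0) ↔ c ∈ Ioo a b := by
  constructor
  · rintro ⟨zs, ⟨haz, hzb⟩, hleft, hright⟩
    have hl : (a + zs) / 2 < c :=
      (hpos _ ⟨by linarith, by linarith⟩).1 (hleft _ ⟨by linarith, by linarith⟩)
    have hr : c < (zs + b) / 2 :=
      (hneg _ ⟨by linarith, by linarith⟩).1 (hright _ ⟨by linarith, by linarith⟩)
    exact ⟨by linarith, by linarith⟩
  · intro hc
    exact ⟨c, hc, fun z hz => (hpos z ⟨hz.1, hz.2.trans hc.2⟩).2 hz.2,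
      fun z hz => (hneg z ⟨hc.1.trans hz.1, hz.2⟩).2 hz.1⟩

noncomputable section

namespace QuadraticExposure

variable {α β z : ℝ}

def density (α β z : ℝ) : ℝ :=
  -(exp (α * z ^ 2 + β * z) * (4 * α ^ 2 * z ^ 2 + 4 * α * β * z + β ^ 2 + 2 * α)) / β

def mode (α β : ℝ) : ℝ := (β + √(-6 * α)) / (-2 * α)

theorem hasDerivAt_density (α β z : ℝ) :
    HasDerivAt (density α β)
      (exp (α * z ^ 2 + β * z) * ((2 * α * z + β) / β) * -((2 * α * z + β) ^ 2 + 6 * α)) z := by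
  have hb : HasDerivAt (fun z => α * z ^ 2 + β * z) (2 * α * z + β) z :=
    (((hasDerivAt_pow 2 z).const_mul α).add ((hasDerivAt_id z).const_mul β)).congr_deriv
      (by ring)
  -- the polynomial factor of the density is `(b')² + b''`
  have hp : HasDerivAt (fun z => (2 * α * z + β) ^ 2 + 2 * α) (4 * α * (2 * α * z + β)) z :=
    (((((hasDerivAt_id z).const_mul (2 * α)).add_const β).pow 2).add_const (2 * α)).congr_deriv
      (by simp only [id]; ring)
  have hdensity : density α β =
      fun z => -(exp (α * z ^ 2 + β * z) * ((2 * α * z + β) ^ 2 + 2 * α)) / β := by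
    funext z; rw [density]; ring
  rw [hdensity]
  exact ((hb.exp.mul hp).neg.div_const β).congr_deriv (by ring)

theorem slope_le (hα : α ≤ 0) (hz : 0 ≤ z) : 2 * α * z + β ≤ β := by
  nlinarith

theorem lt_mode_iff (hα : α < 0) : z < mode α β ↔ -(2 * α * z + β) < √(-6 * α) := by
  rw [mode, lt_div_iff₀ (by linarith)]
  constructor <;> intro h <;> linarith

theorem mode_lt_iff (hα : α < 0) : mode α β < z ↔ √(-6 * α) < -(2 * α * z + β) := by
  rw [mode, div_lt_iff₀ (by linarith)]
  constructor <;> intro h <;> linarith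

theorem mode_mem_Ioo_iff (hα : α < 0) :
    mode α β ∈ Ioo 0 1 ↔ -√(-6 * α) < β ∧ β < -2 * α - √(-6 * α) := by
  have h2α : 0 < -2 * α := by linarith
  rw [mode, mem_Ioo, div_pos_iff_of_pos_right h2α, div_lt_one h2α]
  constructor <;> rintro ⟨h₁, h₂⟩ <;> constructor <;> linarith

section Sign

variable (hα : α < 0) (hβ : β < 0) (hz : 0 ≤ z)
include hα hβ hz

theorem density_factor_pos : 0 < exp (α * z ^ 2 + β * z) * ((2 * α * z + β) / β) :=
  mul_pos (exp_pos _) (div_pos_of_neg_of_neg ((slope_le hα.le hz).trans_lt hβ) hβ)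

theorem deriv_density_pos_iff : 0 < deriv (density α β) z ↔ z < mode α β := by
  have hneg : 0 ≤ -(2 * α * z + β) := by linarith [slope_le (β := β) hα.le hz]
  rw [(hasDerivAt_density α β z).deriv, mul_pos_iff_of_pos_left (density_factor_pos hα hβ hz),
    lt_mode_iff hα, lt_sqrt hneg, neg_sq]
  constructor <;> intro h <;> linarith

theorem deriv_density_neg_iff : deriv (density α β) z < 0 ↔ mode α β < z := by
  have hneg : 0 < -(2 * α * z + β) := by linarith [slope_le (β := β) hα.le hz]
  rw [(hasDerivAt_density α β z).deriv, ← neg_pos, mul_neg, neg_neg,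
    mul_pos_iff_of_pos_left (density_factor_pos hα hβ hz), mode_lt_iff hα, sqrt_lt' hneg, neg_sq]
  constructor <;> intro h <;> linarith

end Sign

end QuadraticExposure

end

open QuadraticExposure in
/-- For `α < 0` and `β < -√(-2α)`, the inner function `b z = αz² + βz`
satisfies `b' z = 2αz + β < 0` and `b'' z + (b' z)² = 2α + (2αz + β)² > 0` on `[0,1]`
(so the quadratic exponentially linked exposure example defines a well-defined
distribution). Moreover, the induced density
`f_Z z = -e^(αz² + βz)(4α²z² + 4αβz + β² + 2α)/β` is unimodal on `[0,1)` — i.e. there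
is `z* ∈ (0,1)` with `f_Z' > 0` on `(0,z*)` and `f_Z' < 0` on `(z*,1)` — if and only if
`-√(-6α) < β < -2α - √(-6α)`. -/
theorem statement17 (α β : ℝ) (hα : α < 0) (hβ : β < -Real.sqrt (-2 * α)) :
    let f : ℝ → ℝ := fun z =>
      -(Real.exp (α * z ^ 2 + β * z) *
          (4 * α ^ 2 * z ^ 2 + 4 * α * β * z + β ^ 2 + 2 * α)) / β
    (∀ z ∈ Set.Icc (0:ℝ) 1, 2 * α * z + β < 0) ∧
    (∀ z ∈ Set.Icc (0:ℝ) 1, 0 < 2 * α + (2 * α * z + β) ^ 2) ∧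
    ((∃ zs ∈ Set.Ioo (0:ℝ) 1,
        (∀ z ∈ Set.Ioo 0 zs, 0 < deriv f z) ∧ (∀ z ∈ Set.Ioo zs 1, deriv f z < 0))
      ↔ (-Real.sqrt (-6 * α) < β ∧ β < -2 * α - Real.sqrt (-6 * α))) := by
  intro f
  have hβ0 : β < 0 := hβ.trans_le (neg_nonpos.2 (sqrt_nonneg _))
  have hβsq : -2 * α < β ^ 2 := by
    simpa using lt_sq_of_sqrt_lt (lt_neg_of_lt_neg hβ)
  refine ⟨fun z hz => (slope_le hα.le hz.1).trans_lt hβ0, fun z hz => ?_, ?_⟩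
  · have hslope : 2 * α * z + β ≤ β := slope_le hα.le hz.1
    nlinarith
  · exact (exists_pos_neg_sign_change_iff (g := deriv f)
      (fun z hz => deriv_density_pos_iff hα hβ0 hz.1.le)
      (fun z hz => deriv_density_neg_iff hα hβ0 hz.1.le)).trans (mode_mem_Ioo_iff hα)
end

section
/- Let α ∈ (1,2), δ > 0, ε < 0 and β > εαδ^{α−1} + √(−εα(α−1)δ^{α−2}), and define b:[0,1]→ℝ by b(z) = ε(z+δ)^α − βz. Then b is twice continuously differentiable with b(0) ≠ b(1), b'(z) = αε(z+δ)^{α−1} − β < 0 for all z ∈ [0,1], and b''(z) + b'(z)² = α(α−1)ε(z+δ)^{α−2} + (αε(z+δ)^{α−1} − β)² > 0 for all z ∈ [0,1]; in particular the power exponentially linked exposure example defines a well-defined distribution. -/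
/-!
Writing `C = e^{b(1)} - e^{b(0)}`, the curve `G = (e^b - e^{b(0)}) / C` has
`G' = e^b b' / C` and `G'' = e^b (b'' + b'²) / C`. Since `b' ≤ 0` and `b(0) ≠ b(1)` we get
`b(1) < b(0)`, so `C < 0`, and the sign conditions on `b'` and `b'' + b'²` become
monotonicity and concavity of `G`.

For the power example `b(z) = ε(z+δ)^α - βz`, put `S = √(-εα(α-1)δ^{α-2})`.
As `ε < 0`, `1 < α < 2` and `z ≥ 0`, `b'` is largest and `b''` smallest at `z = 0`, where the
hypothesis on `β` gives `b'(0) < -S`; hence `b'² > S² = -b''(0) ≥ -b''` on `[0,1]`.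
-/

open Real Set

lemma hasDerivWithinAt_interior_of_forall {D : Set ℝ} {f f' : ℝ → ℝ}
    (hf : ∀ z ∈ D, HasDerivWithinAt f (f' z) D z) :
    ∀ x ∈ interior D, HasDerivWithinAt f (f' x) (interior D) x :=
  fun x hx => (hf x (interior_subset hx)).mono interior_subset

theorem isExposureCurve_expLinked {b b' b'' : ℝ → ℝ}
    (hb : ∀ z ∈ Icc (0:ℝ) 1, HasDerivWithinAt b (b' z) (Icc 0 1) z)
    (hb' : ∀ z ∈ Icc (0:ℝ) 1, HasDerivWithinAt b' (b'' z) (Icc 0 1) z)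
    (hb''_cont : ContinuousOn b'' (Icc 0 1)) (hb_ne : b 0 ≠ b 1) (hb'_zero : b' 0 < 0)
    (hb'_nonpos : ∀ z ∈ Icc (0:ℝ) 1, b' z ≤ 0)
    (hb''_add : ∀ z ∈ Icc (0:ℝ) 1, 0 ≤ b'' z + b' z ^ 2) :
    IsExposureCurve (fun z => (exp (b z) - exp (b 0)) / (exp (b 1) - exp (b 0))) := by
  have hb_cont : ContinuousOn b (Icc 0 1) := fun z hz => (hb z hz).continuousWithinAt
  have hb'_cont : ContinuousOn b' (Icc 0 1) := fun z hz => (hb' z hz).continuousWithinAt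
  have hb_lt : b 1 < b 0 := by
    have hanti := antitoneOn_of_hasDerivWithinAt_nonpos (convex_Icc 0 1) hb_cont
      (hasDerivWithinAt_interior_of_forall hb) fun x hx => hb'_nonpos x (interior_subset hx)
    exact (hanti (left_mem_Icc.2 zero_le_one) (right_mem_Icc.2 zero_le_one) zero_le_one).lt_of_ne
      hb_ne.symm
  set C := exp (b 1) - exp (b 0)
  have hC : C < 0 := sub_neg.2 (exp_lt_exp.2 hb_lt)
  set G := fun z => (exp (b z) - exp (b 0)) / C
  set G' := fun z => exp (b z) * b' z / C
  set G'' := fun z => exp (b z) * (b'' z + b' z ^ 2) / C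
  have hG : ∀ z ∈ Icc (0:ℝ) 1, HasDerivWithinAt G (G' z) (Icc 0 1) z := fun z hz =>
    (((hb z hz).exp).sub_const _).div_const C
  have hG' : ∀ z ∈ Icc (0:ℝ) 1, HasDerivWithinAt G' (G'' z) (Icc 0 1) z := fun z hz =>
    ((((hb z hz).exp).mul (hb' z hz)).div_const C).congr_deriv (by simp only [G'']; ring)
  have hG'_nonneg : ∀ z ∈ Icc (0:ℝ) 1, 0 ≤ G' z := fun z hz =>
    div_nonneg_of_nonpos (mul_nonpos_of_nonneg_of_nonpos (exp_pos _).le (hb'_nonpos z hz)) hC.le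
  have hG''_nonpos : ∀ z ∈ Icc (0:ℝ) 1, G'' z ≤ 0 := fun z hz =>
    div_nonpos_of_nonneg_of_nonpos (mul_nonneg (exp_pos _).le (hb''_add z hz)) hC.le
  have hG_cont : ContinuousOn G (Icc 0 1) := fun z hz => (hG z hz).continuousWithinAt
  refine ⟨?_, ?_, by simp [G], div_self hC.ne, G', G'', hG, hG', ?_, ?_⟩
  · exact monotoneOn_of_hasDerivWithinAt_nonneg (convex_Icc 0 1) hG_cont
      (hasDerivWithinAt_interior_of_forall hG) fun x hx => hG'_nonneg x (interior_subset hx)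
  · exact concaveOn_of_hasDerivWithinAt2_nonpos (convex_Icc 0 1) hG_cont
      (hasDerivWithinAt_interior_of_forall hG) (hasDerivWithinAt_interior_of_forall hG')
      fun x hx => hG''_nonpos x (interior_subset hx)
  · exact ((continuous_exp.comp_continuousOn hb_cont).mul
      (hb''_cont.add (hb'_cont.pow 2))).div_const C
  · exact div_pos_of_neg_of_neg (mul_neg_of_pos_of_neg (exp_pos _) hb'_zero) hC

section PowerInner

variable {α δ ε β z : ℝ}

lemma hasDerivAt_powerInner (hz : 0 < z + δ) :
    HasDerivAt (fun z => ε * (z + δ) ^ α - β * z) (α * ε * (z + δ) ^ (α - 1) - β) z := by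
  have h := ((((hasDerivAt_id z).add_const δ).rpow_const (p := α)
    (Or.inl hz.ne')).const_mul ε).sub ((hasDerivAt_id z).const_mul β)
  exact h.congr_deriv (by simp only [id]; ring)

lemma hasDerivAt_powerInner_deriv (hz : 0 < z + δ) :
    HasDerivAt (fun z => α * ε * (z + δ) ^ (α - 1) - β)
      (α * (α - 1) * ε * (z + δ) ^ (α - 2)) z := by
  have h := ((((hasDerivAt_id z).add_const δ).rpow_const (p := α - 1)
    (Or.inl hz.ne')).const_mul (α * ε)).sub_const β
  exact h.congr_deriv (by rw [show α - 1 - 1 = α - 2 by ring]; simp only [id]; ring)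

lemma powerInner_deriv_lt (hα : 1 < α) (hδ : 0 < δ) (hε : ε < 0)
    (hβ : ε * α * δ ^ (α - 1) + √(-ε * α * (α - 1) * δ ^ (α - 2)) < β) (hz : 0 ≤ z) :
    α * ε * (z + δ) ^ (α - 1) - β < -√(-ε * α * (α - 1) * δ ^ (α - 2)) := by
  have hpow : δ ^ (α - 1) ≤ (z + δ) ^ (α - 1) :=
    rpow_le_rpow hδ.le (by linarith) (by linarith)
  have hαε : α * ε < 0 := mul_neg_of_pos_of_neg (by linarith) hε
  nlinarith [mul_le_mul_of_nonpos_left hpow hαε.le]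

lemma powerInner_deriv2_add_sq_pos (hα : α ∈ Ioo (1:ℝ) 2) (hδ : 0 < δ) (hε : ε < 0)
    (hβ : ε * α * δ ^ (α - 1) + √(-ε * α * (α - 1) * δ ^ (α - 2)) < β) (hz : 0 ≤ z) :
    0 < α * (α - 1) * ε * (z + δ) ^ (α - 2) + (α * ε * (z + δ) ^ (α - 1) - β) ^ 2 := by
  obtain ⟨hα1, hα2⟩ := hα
  set S := √(-ε * α * (α - 1) * δ ^ (α - 2))
  have hcoef : α * (α - 1) * ε < 0 :=
    mul_neg_of_pos_of_neg (mul_pos (by linarith) (by linarith)) hε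
  have hS_sq : S ^ 2 = -(α * (α - 1) * ε * δ ^ (α - 2)) := by
    rw [sq_sqrt (by nlinarith [rpow_pos_of_pos hδ (α - 2)])]; ring
  have hb'' : α * (α - 1) * ε * δ ^ (α - 2) ≤ α * (α - 1) * ε * (z + δ) ^ (α - 2) :=
    mul_le_mul_of_nonpos_left (rpow_le_rpow_of_nonpos hδ (by linarith) (by linarith)) hcoef.le
  have hb' := powerInner_deriv_lt hα1 hδ hε hβ hz
  nlinarith [sqrt_nonneg (-ε * α * (α - 1) * δ ^ (α - 2))]

end PowerInner

/-- For `α ∈ (1,2)`, `δ > 0`, `ε < 0` and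
`β > εαδ^(α-1) + √(-εα(α-1)δ^(α-2))`, the inner function `b z = ε(z+δ)^α - βz` is
twice continuously differentiable on `[0,1]` with `b 0 ≠ b 1`,
`b' z = αε(z+δ)^(α-1) - β < 0` and `b'' z + (b' z)² > 0` on `[0,1]`; in particular the
power exponentially linked exposure example defines a well-defined distribution (the
exponentially linked curve is an exposure curve). -/
theorem statement18 (α δ ε β : ℝ)
    (hα : α ∈ Set.Ioo (1:ℝ) 2) (hδ : 0 < δ) (hε : ε < 0)
    (hβ : ε * α * δ ^ (α - 1) + Real.sqrt (-ε * α * (α - 1) * δ ^ (α - 2)) < β) :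
    let b : ℝ → ℝ := fun z => ε * (z + δ) ^ α - β * z
    let b' : ℝ → ℝ := fun z => α * ε * (z + δ) ^ (α - 1) - β
    let b'' : ℝ → ℝ := fun z => α * (α - 1) * ε * (z + δ) ^ (α - 2)
    b 0 ≠ b 1 ∧
    (∀ z ∈ Set.Icc (0:ℝ) 1, HasDerivWithinAt b (b' z) (Set.Icc 0 1) z) ∧
    (∀ z ∈ Set.Icc (0:ℝ) 1, HasDerivWithinAt b' (b'' z) (Set.Icc 0 1) z) ∧
    ContinuousOn b'' (Set.Icc 0 1) ∧
    (∀ z ∈ Set.Icc (0:ℝ) 1, b' z < 0) ∧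
    (∀ z ∈ Set.Icc (0:ℝ) 1, 0 < b'' z + (b' z) ^ 2) ∧
    IsExposureCurve
      (fun z => (Real.exp (b z) - Real.exp (b 0)) / (Real.exp (b 1) - Real.exp (b 0))) := by
  intro b b' b''
  have hpos : ∀ z ∈ Icc (0:ℝ) 1, 0 < z + δ := fun z hz => by linarith [hz.1]
  have hb : ∀ z ∈ Icc (0:ℝ) 1, HasDerivWithinAt b (b' z) (Icc 0 1) z := fun z hz =>
    (hasDerivAt_powerInner (hpos z hz)).hasDerivWithinAt
  have hb' : ∀ z ∈ Icc (0:ℝ) 1, HasDerivWithinAt b' (b'' z) (Icc 0 1) z := fun z hz =>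
    (hasDerivAt_powerInner_deriv (hpos z hz)).hasDerivWithinAt
  have hb''_cont : ContinuousOn b'' (Icc 0 1) :=
    continuousOn_const.mul ((continuousOn_id.add continuousOn_const).rpow_const
      fun z hz => Or.inl (hpos z hz).ne')
  have hb'_neg : ∀ z ∈ Icc (0:ℝ) 1, b' z < 0 := fun z hz =>
    (powerInner_deriv_lt hα.1 hδ hε hβ hz.1).trans_le (neg_nonpos.2 (sqrt_nonneg _))
  have hb_anti : StrictAntiOn b (Icc 0 1) :=
    strictAntiOn_of_hasDerivWithinAt_neg (convex_Icc 0 1)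
      (fun z hz => (hb z hz).continuousWithinAt) (hasDerivWithinAt_interior_of_forall hb)
      fun x hx => hb'_neg x (interior_subset hx)
  have hb_ne : b 0 ≠ b 1 :=
    (hb_anti (left_mem_Icc.2 zero_le_one) (right_mem_Icc.2 zero_le_one) zero_lt_one).ne'
  have hb''_add : ∀ z ∈ Icc (0:ℝ) 1, 0 < b'' z + b' z ^ 2 := fun z hz =>
    powerInner_deriv2_add_sq_pos hα hδ hε hβ hz.1
  exact ⟨hb_ne, hb, hb', hb''_cont, hb'_neg, hb''_add,
    isExposureCurve_expLinked hb hb' hb''_cont hb_ne (hb'_neg 0 (left_mem_Icc.2 zero_le_one))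
      (fun z hz => (hb'_neg z hz).le) fun z hz => (hb''_add z hz).le⟩
end

section
/- Let g > 1 and b > 0 with b ≠ 1 and bg ≠ 1, and define G_{b,g}:[0,1]→ℝ by G_{b,g}(z) = log( ((g−1)b + (1−bg)b^z)/(1−b) ) / log(bg). Then the argument ((g−1)b + (1−bg)b^z)/(1−b) is strictly positive for every z ∈ [0,1], G_{b,g} is an exposure curve (twice continuously differentiable, non-decreasing, concave, G_{b,g}(0)=0, G_{b,g}(1)=1, G_{b,g}'(0)>0), and it satisfies G_{b,g}'(1)/G_{b,g}'(0) = 1/g and 1/G_{b,g}'(0) = ((b−1)/log(b)) · (log(bg)/(bg−1)); that is, the induced MBBEFD distribution has point mass 1/g at 1 and mean ((b−1)/log(b))·(log(bg)/(bg−1)). -/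
open Real Set

theorem Real.sub_one_div_log_pos {x : ℝ} (hx : 0 < x) (hx1 : x ≠ 1) : 0 < (x - 1) / log x := by
  rcases hx1.lt_or_gt with hlt | hgt
  · exact div_pos_of_neg_of_neg (by linarith) (log_neg hx hlt)
  · exact div_pos (by linarith) (log_pos hgt)

theorem isExposureCurve_of_hasDerivWithinAt {G G' G'' : ℝ → ℝ}
    (hG : ∀ z ∈ Icc (0:ℝ) 1, HasDerivWithinAt G (G' z) (Icc 0 1) z)
    (hG' : ∀ z ∈ Icc (0:ℝ) 1, HasDerivWithinAt G' (G'' z) (Icc 0 1) z)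
    (hG'' : ContinuousOn G'' (Icc 0 1))
    (hG'_nonneg : ∀ z ∈ Ioo (0:ℝ) 1, 0 ≤ G' z) (hG''_nonpos : ∀ z ∈ Ioo (0:ℝ) 1, G'' z ≤ 0)
    (h0 : G 0 = 0) (h1 : G 1 = 1) (hG'0 : 0 < G' 0) : IsExposureCurve G := by
  have hcont : ContinuousOn G (Icc 0 1) := fun z hz => (hG z hz).continuousWithinAt
  have hint : interior (Icc (0:ℝ) 1) = Ioo 0 1 := interior_Icc
  have hG_int : ∀ z ∈ interior (Icc (0:ℝ) 1), HasDerivWithinAt G (G' z) (interior (Icc 0 1)) z :=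
    fun z hz => (hG z (interior_subset hz)).mono interior_subset
  have hG'_int :
      ∀ z ∈ interior (Icc (0:ℝ) 1), HasDerivWithinAt G' (G'' z) (interior (Icc 0 1)) z :=
    fun z hz => (hG' z (interior_subset hz)).mono interior_subset
  refine ⟨monotoneOn_of_hasDerivWithinAt_nonneg (convex_Icc 0 1) hcont hG_int ?_,
    concaveOn_of_hasDerivWithinAt2_nonpos (convex_Icc 0 1) hcont hG_int hG'_int ?_,
    h0, h1, G', G'', hG, hG', hG'', hG'0⟩ <;> rwa [hint]

namespace MBBEFD

noncomputable section

def num (b g z : ℝ) : ℝ := (g - 1) * b + (1 - b * g) * b ^ z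

def curve (b g z : ℝ) : ℝ := log (num b g z / (1 - b)) / log (b * g)

def curveDeriv (b g z : ℝ) : ℝ := (1 - b * g) * b ^ z * log b / (num b g z * log (b * g))

def curveDeriv2 (b g z : ℝ) : ℝ :=
  (1 - b * g) * b ^ z * log b ^ 2 * ((g - 1) * b) / (num b g z ^ 2 * log (b * g))

variable {b g z : ℝ}

theorem num_zero : num b g 0 = 1 - b := by simp [num]; ring

theorem num_one : num b g 1 = b * g * (1 - b) := by simp [num]; ring

theorem num_div_eq (hb1 : b ≠ 1) :
    num b g z / (1 - b) = 1 + (b * g - 1) * ((1 - b ^ z) / (1 - b)) := by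
  have : 1 - b ≠ 0 := sub_ne_zero.2 hb1.symm
  rw [num]
  field_simp
  ring

theorem one_sub_rpow_div_mem_Icc (hb : 0 < b) (hb1 : b ≠ 1) (hz : z ∈ Icc (0:ℝ) 1) :
    (1 - b ^ z) / (1 - b) ∈ Icc (0:ℝ) 1 := by
  obtain ⟨hz0, hz1⟩ := hz
  rcases hb1.lt_or_gt with hlt | hgt
  · have hle : b ≤ b ^ z := by simpa using rpow_le_rpow_of_exponent_ge hb hlt.le hz1
    have hle1 : b ^ z ≤ 1 := rpow_le_one hb.le hlt.le hz0
    exact ⟨div_nonneg (by linarith) (by linarith), (div_le_one (by linarith)).2 (by linarith)⟩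
  · have hle : b ^ z ≤ b := by simpa using rpow_le_rpow_of_exponent_le hgt.le hz1
    have hle1 : 1 ≤ b ^ z := one_le_rpow hgt.le hz0
    exact ⟨div_nonneg_of_nonpos (by linarith) (by linarith),
      (div_le_one_of_neg (by linarith)).2 (by linarith)⟩

theorem num_div_pos (hb : 0 < b) (hg : 0 < g) (hb1 : b ≠ 1) (hz : z ∈ Icc (0:ℝ) 1) :
    0 < num b g z / (1 - b) := by
  obtain ⟨hs0, hs1⟩ := one_sub_rpow_div_mem_Icc hb hb1 hz
  set s := (1 - b ^ z) / (1 - b)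
  have hbg : 0 < b * g := mul_pos hb hg
  rw [num_div_eq hb1, show 1 + (b * g - 1) * s = (1 - s) + s * (b * g) by ring]
  rcases hs1.lt_or_eq with hlt | heq
  · nlinarith
  · simpa [heq] using hbg

theorem num_ne_zero (hb : 0 < b) (hg : 0 < g) (hb1 : b ≠ 1) (hz : z ∈ Icc (0:ℝ) 1) :
    num b g z ≠ 0 :=
  left_ne_zero_of_mul (num_div_pos hb hg hb1 hz).ne'

theorem curve_zero (hb1 : b ≠ 1) : curve b g 0 = 0 := by
  simp [curve, num_zero, div_self (sub_ne_zero.2 hb1.symm)]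

theorem curve_one (hb1 : b ≠ 1) (hL : log (b * g) ≠ 0) : curve b g 1 = 1 := by
  rw [curve, num_one, mul_div_assoc, div_self (sub_ne_zero.2 hb1.symm), mul_one, div_self hL]

theorem hasDerivAt_num (hb : 0 < b) (z : ℝ) :
    HasDerivAt (num b g) ((1 - b * g) * (b ^ z * log b)) z :=
  ((hasStrictDerivAt_const_rpow hb z).hasDerivAt.const_mul _).const_add _

theorem hasDerivAt_curve (hb : 0 < b) (hb1 : b ≠ 1) (hz : num b g z ≠ 0) :
    HasDerivAt (curve b g) (curveDeriv b g z) z := by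
  have h1b : 1 - b ≠ 0 := sub_ne_zero.2 hb1.symm
  have hlog := ((hasDerivAt_num hb z).div_const (1 - b)).log (div_ne_zero hz h1b)
  refine (hlog.div_const (log (b * g))).congr_deriv ?_
  rw [curveDeriv, div_div_div_cancel_right₀ h1b]
  ring

theorem hasDerivAt_curveDeriv (hb : 0 < b) (hL : log (b * g) ≠ 0) (hz : num b g z ≠ 0) :
    HasDerivAt (curveDeriv b g) (curveDeriv2 b g z) z := by
  have hN : HasDerivAt (fun x => (1 - b * g) * b ^ x * log b)
      ((1 - b * g) * (b ^ z * log b) * log b) z :=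
    ((hasStrictDerivAt_const_rpow hb z).hasDerivAt.const_mul _).mul_const _
  have hD := (hasDerivAt_num (g := g) hb z).mul_const (log (b * g))
  refine (hN.div hD (mul_ne_zero hz hL)).congr_deriv ?_
  rw [curveDeriv2]
  field_simp
  rw [num]
  ring

theorem continuousOn_curveDeriv2 (hb : 0 < b) (hg : 0 < g) (hb1 : b ≠ 1)
    (hL : log (b * g) ≠ 0) : ContinuousOn (curveDeriv2 b g) (Icc 0 1) := by
  have hrpow := continuous_const_rpow hb.ne'
  refine ContinuousOn.div (by fun_prop) (by unfold num; fun_prop) fun z hz => ?_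
  exact mul_ne_zero (pow_ne_zero 2 (num_ne_zero hb hg hb1 hz)) hL

theorem curveDeriv_pos (hb : 0 < b) (hg : 0 < g) (hb1 : b ≠ 1) (hbg : b * g ≠ 1)
    (hz : z ∈ Icc (0:ℝ) 1) : 0 < curveDeriv b g z := by
  have hb1' : b - 1 ≠ 0 := sub_ne_zero.2 hb1
  have key : curveDeriv b g z =
      (b * g - 1) / log (b * g) * b ^ z / ((b - 1) / log b * (num b g z / (1 - b))) := by
    rw [curveDeriv]
    field_simp
    ring
  rw [key]
  exact div_pos (mul_pos (sub_one_div_log_pos (mul_pos hb hg) hbg) (rpow_pos_of_pos hb z))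
    (mul_pos (sub_one_div_log_pos hb hb1) (num_div_pos hb hg hb1 hz))

theorem curveDeriv2_nonpos (hb : 0 < b) (hg : 1 ≤ g) (hbg : b * g ≠ 1) :
    curveDeriv2 b g z ≤ 0 := by
  have key : curveDeriv2 b g z =
      -((b * g - 1) / log (b * g) * (b ^ z * log b ^ 2 * ((g - 1) * b) / num b g z ^ 2)) := by
    rw [curveDeriv2]
    ring
  rw [key, neg_nonpos]
  have hpos := sub_one_div_log_pos (mul_pos hb (by linarith : (0:ℝ) < g)) hbg
  have := rpow_pos_of_pos hb z
  have : 0 ≤ g - 1 := by linarith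
  positivity

theorem curveDeriv_one_div_curveDeriv_zero (hb : 0 < b) (hg : 0 < g) (hb1 : b ≠ 1)
    (hbg : b * g ≠ 1) : curveDeriv b g 1 / curveDeriv b g 0 = 1 / g := by
  have h1b : 1 - b ≠ 0 := sub_ne_zero.2 hb1.symm
  have hL := log_ne_zero_of_pos_of_ne_one (mul_pos hb hg) hbg
  have hlogb := log_ne_zero_of_pos_of_ne_one hb hb1
  rw [curveDeriv, curveDeriv, num_one, num_zero, rpow_one, rpow_zero]
  field_simp

theorem one_div_curveDeriv_zero (hb : 0 < b) (hg : 0 < g) (hb1 : b ≠ 1) (hbg : b * g ≠ 1) :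
    1 / curveDeriv b g 0 = (b - 1) / log b * (log (b * g) / (b * g - 1)) := by
  have h1b : 1 - b ≠ 0 := sub_ne_zero.2 hb1.symm
  have hL := log_ne_zero_of_pos_of_ne_one (mul_pos hb hg) hbg
  have hlogb := log_ne_zero_of_pos_of_ne_one hb hb1
  rw [curveDeriv, num_zero, rpow_zero]
  field_simp
  ring

theorem isExposureCurve_curve (hb : 0 < b) (hg : 1 < g) (hb1 : b ≠ 1) (hbg : b * g ≠ 1) :
    IsExposureCurve (curve b g) := by
  have hg0 : 0 < g := by linarith
  have hL := log_ne_zero_of_pos_of_ne_one (mul_pos hb hg0) hbg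
  exact isExposureCurve_of_hasDerivWithinAt
    (fun z hz => (hasDerivAt_curve hb hb1 (num_ne_zero hb hg0 hb1 hz)).hasDerivWithinAt)
    (fun z hz => (hasDerivAt_curveDeriv hb hL (num_ne_zero hb hg0 hb1 hz)).hasDerivWithinAt)
    (continuousOn_curveDeriv2 hb hg0 hb1 hL)
    (fun z hz => (curveDeriv_pos hb hg0 hb1 hbg (Ioo_subset_Icc_self hz)).le)
    (fun _ _ => curveDeriv2_nonpos hb hg.le hbg)
    (curve_zero hb1) (curve_one hb1 hL)
    (curveDeriv_pos hb hg0 hb1 hbg (left_mem_Icc.2 zero_le_one))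

end

end MBBEFD

/-- For `g > 1`, `b > 0`, `b ≠ 1`, `bg ≠ 1`, the MBBEFD exposure curve
`G_{b,g} z = log(((g-1)b + (1-bg)bᶻ)/(1-b)) / log(bg)` has strictly positive argument
on `[0,1]`, is an exposure curve, has derivative
`G' z = (1-bg) bᶻ log b / (((g-1)b + (1-bg)bᶻ) log(bg))` on `[0,1]`, and satisfies
`G' 1 / G' 0 = 1/g` (point mass `1/g` at `1`) and
`1 / G' 0 = ((b-1)/log b)(log(bg)/(bg-1))` (the mean of the induced distribution). -/
theorem statement19 (b g : ℝ) (hg : 1 < g) (hb : 0 < b) (hb1 : b ≠ 1)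
    (hbg : b * g ≠ 1) :
    let G : ℝ → ℝ := fun z =>
      Real.log (((g - 1) * b + (1 - b * g) * b ^ z) / (1 - b)) / Real.log (b * g)
    let G' : ℝ → ℝ := fun z =>
      (1 - b * g) * b ^ z * Real.log b /
        (((g - 1) * b + (1 - b * g) * b ^ z) * Real.log (b * g))
    (∀ z ∈ Set.Icc (0:ℝ) 1, 0 < ((g - 1) * b + (1 - b * g) * b ^ z) / (1 - b)) ∧
    IsExposureCurve G ∧
    (∀ z ∈ Set.Icc (0:ℝ) 1, HasDerivWithinAt G (G' z) (Set.Icc 0 1) z) ∧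
    G' 1 / G' 0 = 1 / g ∧
    1 / G' 0 = (b - 1) / Real.log b * (Real.log (b * g) / (b * g - 1)) := by
  have hg0 : 0 < g := by linarith
  exact ⟨fun z hz => MBBEFD.num_div_pos hb hg0 hb1 hz,
    MBBEFD.isExposureCurve_curve hb hg hb1 hbg,
    fun z hz => (MBBEFD.hasDerivAt_curve hb hb1
      (MBBEFD.num_ne_zero hb hg0 hb1 hz)).hasDerivWithinAt,
    MBBEFD.curveDeriv_one_div_curveDeriv_zero hb hg0 hb1 hbg,
    MBBEFD.one_div_curveDeriv_zero hb hg0 hb1 hbg⟩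
end
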